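/- arXiv:2605.09006 — 11 statements merged into one kernel-verified Lean document; each statement's English description precedes it below -/
import Mathlib

section
/- Let G be a finite simple graph and let e = {u,u'} be an edge of G that is contained in two distinct maximal cliques C₁ and C₂. Then there exist a vertex z ∈ C₂ \ C₁ and a vertex v ∈ C₁ with v ∉ {u,u'}, z ∉ {u,u'}, such that v and z are not adjacent and the four vertices v,u,u',z are pairwise adjacent except exactly the pair {v,z}; in particular {v,u,u',z} is an induced diamond of G three of whose vertices (v, u, u') lie in the clique C₁. -/
/-- An induced diamond in `G`: four distinct vertices `a, b, c, d` such that all pairs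
among them are edges of `G` except exactly the pair `{c, d}`. -/
def IsDiamond {V : Type*} (G : SimpleGraph V) (a b c d : V) : Prop :=
  a ≠ b ∧ a ≠ c ∧ a ≠ d ∧ b ≠ c ∧ b ≠ d ∧ c ≠ d ∧
    G.Adj a b ∧ G.Adj a c ∧ G.Adj a d ∧ G.Adj b c ∧ G.Adj b d ∧ ¬ G.Adj c d

/-- A maximal clique: a clique that is not a proper subset of any other clique. -/
def IsMaximalClique {V : Type*} (G : SimpleGraph V) (s : Set V) : Prop :=
  G.IsClique s ∧ ∀ t : Set V, G.IsClique t → s ⊆ t → s = t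

theorem stmt0 {V : Type*} [Fintype V] (G : SimpleGraph V) (u u' : V) (huu' : G.Adj u u')
    (C₁ C₂ : Set V) (hC₁ : IsMaximalClique G C₁) (hC₂ : IsMaximalClique G C₂)
    (hne : C₁ ≠ C₂) (hu₁ : u ∈ C₁) (hu'₁ : u' ∈ C₁) (hu₂ : u ∈ C₂) (hu'₂ : u' ∈ C₂) :
    ∃ z ∈ C₂ \ C₁, ∃ v ∈ C₁, v ≠ u ∧ v ≠ u' ∧ z ≠ u ∧ z ≠ u' ∧
      ¬ G.Adj v z ∧ IsDiamond G u u' v z := by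
  obtain ⟨z, hz2, hz1⟩ : ∃ z ∈ C₂, z ∉ C₁ := by
    by_contra h
    push_neg at h
    exact hne (hC₂.2 C₁ hC₁.1 h).symm
  obtain ⟨v, hv1, hvz⟩ : ∃ v ∈ C₁, ¬ G.Adj v z := by
    by_contra h
    push_neg at h
    have hcl : G.IsClique (insert z C₁) := by
      apply hC₁.1.insert
      intro b hb _
      exact (h b hb).symm
    have := hC₁.2 (insert z C₁) hcl (Set.subset_insert _ _)
    exact hz1 (this ▸ Set.mem_insert z C₁)
  have hzu : z ≠ u := fun h => hz1 (h ▸ hu₁)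
  have hzu' : z ≠ u' := fun h => hz1 (h ▸ hu'₁)
  have hvz' : v ≠ z := fun h => hz1 (h ▸ hv1)
  have huz : G.Adj u z := hC₂.1 hu₂ hz2 hzu.symm
  have hu'z : G.Adj u' z := hC₂.1 hu'₂ hz2 hzu'.symm
  have hvu : v ≠ u := fun h => hvz (h ▸ huz)
  have hvu' : v ≠ u' := fun h => hvz (h ▸ hu'z)
  have huv : G.Adj u v := hC₁.1 hu₁ hv1 hvu.symm
  have hu'v : G.Adj u' v := hC₁.1 hu'₁ hv1 hvu'.symm
  exact ⟨z, ⟨hz2, hz1⟩, v, hv1, hvu, hvu', hzu, hzu',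
    hvz, huu'.ne, hvu.symm, hzu.symm, hvu'.symm, hzu'.symm, hvz', huu',
    huv, huz, hu'v, hu'z, hvz⟩
end

section
/- Let G be a finite simple graph, let e = {u,v} be an edge of G such that W(e) is a clique, and suppose there exist a vertex z ∉ W(e) and two distinct vertices w, w' ∈ W(e) such that z is adjacent to both w and w'. Then there is an endpoint a ∈ {u,v} that is not adjacent to z, the vertices w, w' are distinct from a and z, and the four vertices a, w, w', z are pairwise adjacent except exactly the pair {a,z}; in particular G contains an induced diamond containing z. -/
/-- For an edge `{u, v}`, `W(e) = {u, v} ∪ (N(u) ∩ N(v))`. -/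
def Wset {V : Type*} (G : SimpleGraph V) (u v : V) : Set V :=
  {u, v} ∪ (G.neighborSet u ∩ G.neighborSet v)

theorem stmt3 {V : Type*} [Fintype V] (G : SimpleGraph V) (u v : V) (huv : G.Adj u v)
    (hW : G.IsClique (Wset G u v)) (z w w' : V) (hz : z ∉ Wset G u v)
    (hww' : w ≠ w') (hw : w ∈ Wset G u v) (hw' : w' ∈ Wset G u v)
    (hzw : G.Adj z w) (hzw' : G.Adj z w') :
    ∃ a, (a = u ∨ a = v) ∧ ¬ G.Adj a z ∧ w ≠ a ∧ w' ≠ a ∧ w ≠ z ∧ w' ≠ z ∧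
      IsDiamond G w w' a z := by
  have hu : u ∈ Wset G u v := Or.inl (Or.inl rfl)
  have hv : v ∈ Wset G u v := Or.inl (Or.inr rfl)
  obtain ⟨a, ha, hna⟩ : ∃ a, (a = u ∨ a = v) ∧ ¬ G.Adj z a := by
    by_contra h
    push_neg at h
    exact hz (Or.inr ⟨(h u (Or.inl rfl)).symm, (h v (Or.inr rfl)).symm⟩)
  have haW : a ∈ Wset G u v := by rcases ha with rfl | rfl <;> assumption
  have hwa : w ≠ a := fun h => hna (h ▸ hzw)
  have hw'a : w' ≠ a := fun h => hna (h ▸ hzw')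
  have hwz : w ≠ z := fun h => hz (h ▸ hw)
  have hw'z : w' ≠ z := fun h => hz (h ▸ hw')
  have haz : a ≠ z := fun h => hz (h ▸ haW)
  exact ⟨a, ha, fun h => hna h.symm, hwa, hw'a, hwz, hw'z,
    hww', hwa, hwz, hw'a, hw'z, haz,
    hW hw hw' hww', hW hw haW hwa, hzw.symm, hW hw' haW hw'a, hzw'.symm,
    fun h => hna h.symm⟩
end

section
/- Let G be a finite simple graph and let e₁, e₂, e₃ be edges of G such that the sets W(e₁), W(e₂), W(e₃) are pairwise distinct. Suppose there exist three distinct vertices u₁, u₂, u₃ of G with u₁, u₂ ∈ W(e₁), u₂, u₃ ∈ W(e₂), and u₃, u₁ ∈ W(e₃). Then G contains an induced diamond. -/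
theorem stmt4 {V : Type*} [Fintype V] (G : SimpleGraph V)
    (a₁ b₁ a₂ b₂ a₃ b₃ : V)
    (he₁ : G.Adj a₁ b₁) (he₂ : G.Adj a₂ b₂) (he₃ : G.Adj a₃ b₃)
    (h12 : Wset G a₁ b₁ ≠ Wset G a₂ b₂)
    (h13 : Wset G a₁ b₁ ≠ Wset G a₃ b₃)
    (h23 : Wset G a₂ b₂ ≠ Wset G a₃ b₃)
    (u₁ u₂ u₃ : V) (hu12 : u₁ ≠ u₂) (hu13 : u₁ ≠ u₃) (hu23 : u₂ ≠ u₃)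
    (h1 : u₁ ∈ Wset G a₁ b₁) (h1' : u₂ ∈ Wset G a₁ b₁)
    (h2 : u₂ ∈ Wset G a₂ b₂) (h2' : u₃ ∈ Wset G a₂ b₂)
    (h3 : u₃ ∈ Wset G a₃ b₃) (h3' : u₁ ∈ Wset G a₃ b₃) :
    ∃ a b c d : V, IsDiamond G a b c d := by
  by_contra hnd
  push_neg at hnd
  -- If there is no diamond, every Wset of an edge is a clique.
  have clique : ∀ a b x y : V, G.Adj a b → x ∈ Wset G a b → y ∈ Wset G a b → x ≠ y →
      G.Adj x y := by
    intro a b x y hab hx hy hxy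
    simp only [Wset, Set.mem_union, Set.mem_insert_iff, Set.mem_singleton_iff,
      Set.mem_inter_iff, SimpleGraph.mem_neighborSet] at hx hy
    rcases hx with (rfl | rfl) | ⟨hxa, hxb⟩ <;> rcases hy with (rfl | rfl) | ⟨hya, hyb⟩
    · exact absurd rfl hxy
    · exact hab
    · exact hya
    · exact hab.symm
    · exact absurd rfl hxy
    · exact hyb
    · exact hxa.symm
    · exact hxb.symm
    · by_contra h
      exact hnd a b x y ⟨hab.ne, hxa.ne, hya.ne, hxb.ne, hyb.ne, hxy,
        hab, hxa, hya, hxb, hyb, h⟩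
  -- If x y is an edge inside Wset a b, then Wset a b ⊆ Wset x y.
  have subset : ∀ a b x y : V, G.Adj a b → x ∈ Wset G a b → y ∈ Wset G a b → G.Adj x y →
      Wset G a b ⊆ Wset G x y := by
    intro a b x y hab hx hy hxy z hz
    simp only [Wset, Set.mem_union, Set.mem_insert_iff, Set.mem_singleton_iff,
      Set.mem_inter_iff, SimpleGraph.mem_neighborSet]
    by_cases hzx : z = x
    · exact Or.inl (Or.inl hzx)
    by_cases hzy : z = y
    · exact Or.inl (Or.inr hzy)
    exact Or.inr ⟨clique a b x z hab hx hz (Ne.symm hzx),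
      clique a b y z hab hy hz (Ne.symm hzy)⟩
  -- Hence equality of the Wsets.
  have weq : ∀ a b x y : V, G.Adj a b → x ∈ Wset G a b → y ∈ Wset G a b → G.Adj x y →
      Wset G x y = Wset G a b := by
    intro a b x y hab hx hy hxy
    have hsub := subset a b x y hab hx hy hxy
    have ha : a ∈ Wset G a b := by simp [Wset]
    have hb : b ∈ Wset G a b := by simp [Wset]
    exact Set.Subset.antisymm (subset x y a b hxy (hsub ha) (hsub hb) hab) hsub
  have hA12 : G.Adj u₁ u₂ := clique a₁ b₁ u₁ u₂ he₁ h1 h1' hu12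
  have hA23 : G.Adj u₂ u₃ := clique a₂ b₂ u₂ u₃ he₂ h2 h2' hu23
  have hA13 : G.Adj u₁ u₃ := (clique a₃ b₃ u₃ u₁ he₃ h3 h3' (Ne.symm hu13)).symm
  have hW12 : Wset G u₁ u₂ = Wset G a₁ b₁ := weq a₁ b₁ u₁ u₂ he₁ h1 h1' hA12
  have hu3mem : u₃ ∈ Wset G a₁ b₁ := by
    rw [← hW12]
    simp only [Wset, Set.mem_union, Set.mem_inter_iff, SimpleGraph.mem_neighborSet]
    exact Or.inr ⟨hA13, hA23⟩
  have hW13 : Wset G u₁ u₃ = Wset G a₁ b₁ := weq a₁ b₁ u₁ u₃ he₁ h1 hu3mem hA13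
  have hW13' : Wset G u₁ u₃ = Wset G a₃ b₃ := weq a₃ b₃ u₁ u₃ he₃ h3' h3 hA13
  exact h13 (hW13.symm.trans hW13')
end

section
/- Let G be a finite simple graph and let e, f be edges of G with W(e) ≠ W(f). If W(e) ∩ W(f) contains at least two vertices, then G contains an induced diamond. -/
lemma mem_Wset {V : Type*} {G : SimpleGraph V} {u v z : V} :
    z ∈ Wset G u v ↔ z = u ∨ z = v ∨ (G.Adj u z ∧ G.Adj v z) := by
  simp [Wset, SimpleGraph.mem_neighborSet, or_assoc]

lemma key_lemma {V : Type*} {G : SimpleGraph V}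
    (nd : ∀ p q r s : V, ¬ IsDiamond G p q r s)
    {p q r s : V} (hpq : G.Adj p q) (hpr : G.Adj p r) (hps : G.Adj p s)
    (hqr : G.Adj q r) (hqs : G.Adj q s) : r = s ∨ G.Adj r s := by
  by_contra h
  push_neg at h
  exact nd p q r s ⟨hpq.ne, hpr.ne, hps.ne, hqr.ne, hqs.ne, h.1,
    hpq, hpr, hps, hqr, hqs, h.2⟩

lemma clique_Wset {V : Type*} {G : SimpleGraph V}
    (nd : ∀ p q r s : V, ¬ IsDiamond G p q r s)
    {u v z w : V} (huv : G.Adj u v) (hz : z ∈ Wset G u v) (hw : w ∈ Wset G u v)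
    (hzw : z ≠ w) : G.Adj z w := by
  rw [mem_Wset] at hz hw
  rcases hz with rfl | rfl | ⟨hz1, hz2⟩ <;> rcases hw with rfl | rfl | hw
  · exact absurd rfl hzw
  · exact huv
  · exact hw.1
  · exact huv.symm
  · exact absurd rfl hzw
  · exact hw.2
  · exact hz1.symm
  · exact hz2.symm
  · rcases key_lemma nd huv hz1 hw.1 hz2 hw.2 with h | h
    · exact absurd h hzw
    · exact h

lemma Wset_eq {V : Type*} {G : SimpleGraph V}
    (nd : ∀ p q r s : V, ¬ IsDiamond G p q r s)
    {u v x y : V} (huv : G.Adj u v) (hx : x ∈ Wset G u v) (hy : y ∈ Wset G u v)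
    (hxy : x ≠ y) : Wset G u v = Wset G x y := by
  have hu : u ∈ Wset G u v := mem_Wset.2 (Or.inl rfl)
  have hv : v ∈ Wset G u v := mem_Wset.2 (Or.inr (Or.inl rfl))
  have hadjxy : G.Adj x y := clique_Wset nd huv hx hy hxy
  ext z
  constructor
  · intro hz
    rw [mem_Wset]
    by_cases hzx : z = x
    · exact Or.inl hzx
    by_cases hzy : z = y
    · exact Or.inr (Or.inl hzy)
    exact Or.inr (Or.inr ⟨(clique_Wset nd huv hz hx hzx).symm,
      (clique_Wset nd huv hz hy hzy).symm⟩)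
  · intro hz
    rw [mem_Wset] at hz
    rcases hz with rfl | rfl | ⟨hxz, hyz⟩
    · exact hx
    · exact hy
    -- z is a common neighbor of x and y
    have key2 : ∀ w : V, w ∈ Wset G u v → z ≠ w → G.Adj w z := by
      intro w hw hzw
      by_cases hxw : x = w
      · exact hxw ▸ hxz
      by_cases hyw : y = w
      · exact hyw ▸ hyz
      have hxw' : G.Adj x w := clique_Wset nd huv hx hw hxw
      have hyw' : G.Adj y w := clique_Wset nd huv hy hw hyw
      rcases key_lemma nd hadjxy hxz hxw' hyz hyw' with h | h
      · exact absurd h hzw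
      · exact h.symm
    rw [mem_Wset]
    by_cases hza : z = u
    · exact Or.inl hza
    by_cases hzb : z = v
    · exact Or.inr (Or.inl hzb)
    exact Or.inr (Or.inr ⟨key2 u hu hza, key2 v hv hzb⟩)

theorem stmt5 {V : Type*} [Fintype V] (G : SimpleGraph V) (a b c d : V)
    (hab : G.Adj a b) (hcd : G.Adj c d)
    (hne : Wset G a b ≠ Wset G c d)
    (x y : V) (hxy : x ≠ y)
    (hx : x ∈ Wset G a b ∩ Wset G c d) (hy : y ∈ Wset G a b ∩ Wset G c d) :
    ∃ p q r s : V, IsDiamond G p q r s := by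
  by_contra h
  push_neg at h
  have h1 := Wset_eq h hab hx.1 hy.1 hxy
  have h2 := Wset_eq h hcd hx.2 hy.2 hxy
  exact hne (h1.trans h2.symm)
end

section
/- Let F be a finite bipartite graph with parts P and Q, where |Q| = n ≥ 1, and suppose every vertex of P has degree at least r, where r ≥ 60. If F contains no cycle of length 6 (i.e., no subgraph isomorphic to C₆), then the number of edges of F is strictly less than 64·(n + n²/r²), and |P| is strictly less than 64·(n/r + n²/r³). -/
open Finset

set_option linter.unusedSectionVars false
set_option linter.unusedVariables false
set_option maxHeartbeats 1000000

namespace Stmt6Aux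

variable {V : Type*} [Fintype V] [DecidableEq V]

noncomputable def hf (T : Finset V) : Finset V :=
  (Finset.exists_subset_card_eq (Nat.div_le_self T.card 2)).choose

lemma hf_subset (T : Finset V) : hf T ⊆ T :=
  (Finset.exists_subset_card_eq (Nat.div_le_self T.card 2)).choose_spec.1

lemma hf_card (T : Finset V) : (hf T).card = T.card / 2 :=
  (Finset.exists_subset_card_eq (Nat.div_le_self T.card 2)).choose_spec.2

noncomputable def ordV : V → ℕ := fun v => ((Fintype.equivFin V) v : ℕ)

lemma ordV_inj : Function.Injective (ordV (V := V)) := by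
  intro a b h
  exact (Fintype.equivFin V).injective (Fin.ext h)

/-- No 6-cycle, in structured (bipartite) form. -/
def NoC6 (P : Finset V) (A : V → Finset V) : Prop :=
  ∀ pa pb pc qa qb qc : V, pa ∈ P → pb ∈ P → pc ∈ P →
    pa ≠ pb → pb ≠ pc → pa ≠ pc → qa ≠ qb → qb ≠ qc → qa ≠ qc →
    qa ∈ A pa → qa ∈ A pb → qb ∈ A pb → qb ∈ A pc → qc ∈ A pc → qc ∈ A pa → False

/-- Trace dichotomy: two traces on `A p` sharing a point are equal 2-sets. -/
lemma traceA {P : Finset V} {A : V → Finset V} (h6 : NoC6 P A)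
    {p p' p'' x : V} (hp : p ∈ P) (hp' : p' ∈ P) (hp'' : p'' ∈ P)
    (h1 : p' ≠ p) (h2 : p'' ≠ p) (h3 : p' ≠ p'')
    (hx' : x ∈ A p ∩ A p') (hx'' : x ∈ A p ∩ A p'')
    (hc' : 2 ≤ (A p ∩ A p').card) (hc'' : 2 ≤ (A p ∩ A p'').card) :
    A p ∩ A p' = A p ∩ A p'' ∧ (A p ∩ A p').card = 2 := by
  have key : ∀ y z : V, y ∈ A p ∩ A p' → z ∈ A p ∩ A p'' → y ≠ x → z ≠ x → y ≠ z → False := by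
    intro y z hy hz hyx hzx hyz
    exact h6 p p' p'' y x z hp hp' hp'' (Ne.symm h1) h3 (Ne.symm h2)
      hyx (fun h => hzx h.symm) hyz
      (Finset.mem_inter.1 hy).1 (Finset.mem_inter.1 hy).2
      (Finset.mem_inter.1 hx').2 (Finset.mem_inter.1 hx'').2
      (Finset.mem_inter.1 hz).2 (Finset.mem_inter.1 hz).1
  obtain ⟨y, hyT, hyx⟩ := Finset.exists_mem_ne (by omega) x (s := A p ∩ A p')
  obtain ⟨z, hzT, hzx⟩ := Finset.exists_mem_ne (by omega) x (s := A p ∩ A p'')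
  by_cases hyz : y = z
  · subst hyz
    by_cases h3' : 3 ≤ (A p ∩ A p').card
    · obtain ⟨w, hwT, hwy⟩ := Finset.exists_mem_ne
        (s := (A p ∩ A p').erase x) (by rw [Finset.card_erase_of_mem hx']; omega) y
      exact (key w y (Finset.mem_of_mem_erase hwT) hzT (Finset.ne_of_mem_erase hwT) hyx hwy).elim
    · by_cases h3'' : 3 ≤ (A p ∩ A p'').card
      · obtain ⟨w, hwT, hwy⟩ := Finset.exists_mem_ne
          (s := (A p ∩ A p'').erase x) (by rw [Finset.card_erase_of_mem hx'']; omega) y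
        exact (key y w hyT (Finset.mem_of_mem_erase hwT) hyx (Finset.ne_of_mem_erase hwT)
          (fun h => hwy h.symm)).elim
      · have hc2' : (A p ∩ A p').card = 2 := by omega
        have hc2'' : (A p ∩ A p'').card = 2 := by omega
        have hxy : ({x, y} : Finset V).card = 2 := by
          rw [Finset.card_insert_of_notMem (by simp [Ne.symm hyx]), Finset.card_singleton]
        have hsub' : ({x, y} : Finset V) ⊆ A p ∩ A p' := by
          intro w hw
          rcases Finset.mem_insert.1 hw with h | h
          · exact h ▸ hx'
          · exact (Finset.mem_singleton.1 h) ▸ hyT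
        have hsub'' : ({x, y} : Finset V) ⊆ A p ∩ A p'' := by
          intro w hw
          rcases Finset.mem_insert.1 hw with h | h
          · exact h ▸ hx''
          · exact (Finset.mem_singleton.1 h) ▸ hzT
        have he' : ({x, y} : Finset V) = A p ∩ A p' :=
          Finset.eq_of_subset_of_card_le hsub' (by omega)
        have he'' : ({x, y} : Finset V) = A p ∩ A p'' :=
          Finset.eq_of_subset_of_card_le hsub'' (by omega)
        exact ⟨he' ▸ he'', hc2'⟩
  · exact (key y z hyT hzT hyx hzx hyz).elim


/-- Whether `q` is kept in line `p` relative to partner `p'`. -/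
noncomputable def KeepP (A : V → Finset V) (p p' q : V) : Prop :=
  if (A p ∩ A p').card = 2 then q ∈ (A p ∩ A p') \ hf (A p ∩ A p')
  else if ordV p < ordV p' then q ∈ hf (A p ∩ A p')
  else q ∈ (A p ∩ A p') \ hf (A p ∩ A p')

def keep (P : Finset V) (A : V → Finset V) (p q : V) : Prop :=
  ∀ p' ∈ P, p' ≠ p → q ∈ A p' → (A p ∩ A p').card ≤ 1 ∨ KeepP A p p' q

/-- The kept part of the neighbourhood of `p`. -/
noncomputable def KS (P : Finset V) (A : V → Finset V) (p : V) : Finset V :=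
  @Finset.filter _ (fun q => keep P A p q) (Classical.decPred _) (A p)

lemma mem_KS {P : Finset V} {A : V → Finset V} {p q : V} :
    q ∈ KS P A p ↔ q ∈ A p ∧ keep P A p q := by
  unfold KS
  exact @Finset.mem_filter _ _ (Classical.decPred _) _ _

lemma KS_subset {P : Finset V} {A : V → Finset V} {p : V} : KS P A p ⊆ A p :=
  fun q hq => (mem_KS.1 hq).1

/-- Any two kept lines meet in at most one point. -/
lemma K2 {P : Finset V} {A : V → Finset V} (h6 : NoC6 P A)
    {p p' : V} (hp : p ∈ P) (hp' : p' ∈ P) (hne : p ≠ p') :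
    (KS P A p ∩ KS P A p').card ≤ 1 := by
  have hsubT : KS P A p ∩ KS P A p' ⊆ A p ∩ A p' := by
    intro q hq
    have h1 := Finset.mem_inter.1 hq
    exact Finset.mem_inter.2 ⟨KS_subset h1.1, KS_subset h1.2⟩
  by_cases hT : (A p ∩ A p').card ≤ 1
  · exact le_trans (Finset.card_le_card hsubT) hT
  push_neg at hT
  have hcomm : A p' ∩ A p = A p ∩ A p' := Finset.inter_comm _ _
  -- each q in the intersection satisfies both keep-conditions
  have main : ∀ q ∈ KS P A p ∩ KS P A p',
      (A p ∩ A p').card = 2 ∧ q ∈ (A p ∩ A p') \ hf (A p ∩ A p') := by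
    intro q hq
    have h1 := Finset.mem_inter.1 hq
    have hqA : q ∈ A p := KS_subset h1.1
    have hqA' : q ∈ A p' := KS_subset h1.2
    have k1 := (mem_KS.1 h1.1).2 p' hp' (Ne.symm hne) hqA'
    have k2 := (mem_KS.1 h1.2).2 p hp hne hqA
    rcases k1 with h | k1
    · omega
    rcases k2 with h | k2
    · rw [hcomm] at h; omega
    unfold KeepP at k1 k2
    rw [hcomm] at k2
    by_cases h2 : (A p ∩ A p').card = 2
    · rw [if_pos h2] at k1
      exact ⟨h2, k1⟩
    · rw [if_neg h2] at k1 k2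
      rcases Nat.lt_trichotomy (ordV p) (ordV p') with hlt | heq | hgt
      · rw [if_pos hlt] at k1
        rw [if_neg (by omega)] at k2
        exact absurd k1 (Finset.mem_sdiff.1 k2).2
      · exact absurd (ordV_inj heq) hne
      · rw [if_neg (by omega)] at k1
        rw [if_pos hgt] at k2
        exact absurd k2 (Finset.mem_sdiff.1 k1).2
  -- so the intersection is inside a 1-element set
  by_cases hempty : (KS P A p ∩ KS P A p').Nonempty
  · obtain ⟨q0, hq0⟩ := hempty
    obtain ⟨h2card, _⟩ := main q0 hq0
    have hsd : ((A p ∩ A p') \ hf (A p ∩ A p')).card = 1 := by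
      rw [Finset.card_sdiff_of_subset (hf_subset _), hf_card, h2card]
    calc (KS P A p ∩ KS P A p').card
        ≤ ((A p ∩ A p') \ hf (A p ∩ A p')).card :=
          Finset.card_le_card (fun q hq => (main q hq).2)
      _ = 1 := hsd
  · rw [Finset.not_nonempty_iff_eq_empty.1 hempty]; simp


/-- Each line keeps at least a third of its points. -/
lemma K_card {P : Finset V} {A : V → Finset V} (h6 : NoC6 P A)
    {p : V} (hp : p ∈ P) : (A p).card ≤ 3 * (KS P A p).card := by
  classical
  set Del : Finset V := (A p).filter (fun q => ¬ keep P A p q) with hDel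
  have hKD : Del = A p \ KS P A p := by
    ext q
    simp only [hDel, Finset.mem_filter, Finset.mem_sdiff, mem_KS]
    tauto
  have hsplit : (KS P A p).card + Del.card = (A p).card := by
    rw [hKD]
    have := Finset.card_sdiff_add_card_eq_card (KS_subset (P := P) (A := A) (p := p))
    omega
  -- the collection of heavy traces
  set 𝒯 : Finset (Finset V) :=
    (P.filter (fun p' => p' ≠ p ∧ 2 ≤ (A p ∩ A p').card)).image (fun p' => A p ∩ A p') with h𝒯
  have hTsub : ∀ T ∈ 𝒯, T ⊆ A p := by
    intro T hT
    obtain ⟨p', _, rfl⟩ := Finset.mem_image.1 hT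
    exact Finset.inter_subset_left
  have hTdisj : ∀ T₁ ∈ 𝒯, ∀ T₂ ∈ 𝒯, T₁ ≠ T₂ → Disjoint T₁ T₂ := by
    intro T₁ hT₁ T₂ hT₂ hne
    rw [Finset.disjoint_left]
    intro x hx1 hx2
    obtain ⟨p₁, hp₁, rfl⟩ := Finset.mem_image.1 hT₁
    obtain ⟨p₂, hp₂, rfl⟩ := Finset.mem_image.1 hT₂
    have h₁ := Finset.mem_filter.1 hp₁
    have h₂ := Finset.mem_filter.1 hp₂
    have hp₁₂ : p₁ ≠ p₂ := by rintro rfl; exact hne rfl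
    exact hne (traceA h6 hp h₁.1 h₂.1 h₁.2.1 h₂.2.1 hp₁₂ hx1 hx2 h₁.2.2 h₂.2.2).1
  have hDelsub : ∀ q ∈ Del, ∃ p' ∈ P, p' ≠ p ∧ q ∈ A p' ∧ 2 ≤ (A p ∩ A p').card ∧
      ¬ KeepP A p p' q := by
    intro q hq
    have := (Finset.mem_filter.1 hq).2
    unfold keep at this
    push_neg at this
    obtain ⟨p', hp', hne, hqA', hcard, hK⟩ := this
    exact ⟨p', hp', hne, hqA', by omega, hK⟩
  -- per-trace bound
  have hper : ∀ T ∈ 𝒯, 3 * (Del ∩ T).card ≤ 2 * T.card := by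
    intro T hT
    obtain ⟨p₀, hp₀mem, hTeq⟩ := Finset.mem_image.1 hT
    have h₀ := Finset.mem_filter.1 hp₀mem
    -- every failing witness for q ∈ Del ∩ T has trace equal to T
    have htrace : ∀ q ∈ Del ∩ T, ∀ p' ∈ P, p' ≠ p → q ∈ A p' → 2 ≤ (A p ∩ A p').card →
        A p ∩ A p' = T := by
      intro q hq p' hp' hne hqA' hc
      by_cases hpp : p' = p₀
      · rw [hpp, hTeq]
      · have hqT : q ∈ T := (Finset.mem_inter.1 hq).2
        have hqAp : q ∈ A p := hTsub T hT hqT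
        have hx' : q ∈ A p ∩ A p' := Finset.mem_inter.2 ⟨hqAp, hqA'⟩
        have hx'' : q ∈ A p ∩ A p₀ := by rw [hTeq]; exact hqT
        have := traceA h6 hp hp' h₀.1 hne h₀.2.1 hpp hx' hx'' hc (by rw [hTeq] at h₀ ⊢; exact h₀.2.2)
        rw [this.1, hTeq]
    by_cases h2 : T.card = 2
    · -- deleted points lie in hf T
      have hsub : Del ∩ T ⊆ hf T := by
        intro q hq
        obtain ⟨p', hp', hne, hqA', hc, hK⟩ := hDelsub q ((Finset.mem_inter.1 hq).1)
        have heqT := htrace q hq p' hp' hne hqA' hc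
        unfold KeepP at hK
        rw [heqT] at hK
        rw [if_pos h2] at hK
        have hqT : q ∈ T := (Finset.mem_inter.1 hq).2
        by_contra hcon
        exact hK (Finset.mem_sdiff.2 ⟨hqT, hcon⟩)
      have := Finset.card_le_card hsub
      rw [hf_card, h2] at this
      omega
    · -- big trace: unique witness p₀, deleted points lie in one half
      have h3le : 3 ≤ T.card := by
        have := h₀.2.2
        rw [hTeq] at this
        omega
      have huniq : ∀ q ∈ Del ∩ T, ∀ p' ∈ P, p' ≠ p → q ∈ A p' → 2 ≤ (A p ∩ A p').card →
          p' = p₀ := by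
        intro q hq p' hp' hne hqA' hc
        by_contra hpp
        have heqT := htrace q hq p' hp' hne hqA' hc
        have hqT : q ∈ T := (Finset.mem_inter.1 hq).2
        have hx' : q ∈ A p ∩ A p' := by rw [heqT]; exact hqT
        have hx'' : q ∈ A p ∩ A p₀ := by rw [hTeq]; exact hqT
        have := traceA h6 hp hp' h₀.1 hne h₀.2.1 hpp hx' hx'' hc (by rw [hTeq]; omega)
        rw [heqT] at this
        omega
      have hsub : Del ∩ T ⊆ (if ordV p < ordV p₀ then T \ hf T else hf T) := by
        intro q hq
        obtain ⟨p', hp', hne, hqA', hc, hK⟩ := hDelsub q ((Finset.mem_inter.1 hq).1)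
        have hp'₀ : p' = p₀ := huniq q hq p' hp' hne hqA' hc
        subst hp'₀
        unfold KeepP at hK
        rw [hTeq] at hK
        rw [if_neg h2] at hK
        have hqT : q ∈ T := (Finset.mem_inter.1 hq).2
        by_cases hord : ordV p < ordV p'
        · rw [if_pos hord] at hK
          rw [if_pos hord]
          exact Finset.mem_sdiff.2 ⟨hqT, hK⟩
        · rw [if_neg hord] at hK
          rw [if_neg hord]
          by_contra hcon
          exact hK (Finset.mem_sdiff.2 ⟨hqT, hcon⟩)
      have hcard : (Del ∩ T).card ≤ (T.card + 1) / 2 := by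
        have := Finset.card_le_card hsub
        by_cases hord : ordV p < ordV p₀
        · rw [if_pos hord] at this
          rw [Finset.card_sdiff_of_subset (hf_subset T), hf_card] at this
          omega
        · rw [if_neg hord] at this
          rw [hf_card] at this
          omega
      omega
  -- assemble
  have hDelcover : Del ⊆ 𝒯.biUnion (fun T => Del ∩ T) := by
    intro q hq
    obtain ⟨p', hp', hne, hqA', hc, _⟩ := hDelsub q hq
    refine Finset.mem_biUnion.2 ⟨A p ∩ A p', ?_, ?_⟩
    · exact Finset.mem_image.2 ⟨p', Finset.mem_filter.2 ⟨hp', hne, hc⟩, rfl⟩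
    · refine Finset.mem_inter.2 ⟨hq, ?_⟩
      refine Finset.mem_inter.2 ⟨(Finset.mem_filter.1 hq).1, hqA'⟩
  have hDelcard : Del.card ≤ ∑ T ∈ 𝒯, (Del ∩ T).card := by
    calc Del.card ≤ (𝒯.biUnion (fun T => Del ∩ T)).card := Finset.card_le_card hDelcover
    _ ≤ ∑ T ∈ 𝒯, (Del ∩ T).card := Finset.card_biUnion_le
  have hsum : ∑ T ∈ 𝒯, T.card = (𝒯.biUnion (fun T => T)).card := by
    rw [Finset.card_biUnion]
    intro T₁ h₁ T₂ h₂ hne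
    exact hTdisj T₁ h₁ T₂ h₂ hne
  have hbig : (𝒯.biUnion (fun T => T)).card ≤ (A p).card := by
    apply Finset.card_le_card
    intro q hq
    obtain ⟨T, hT, hqT⟩ := Finset.mem_biUnion.1 hq
    exact hTsub T hT hqT
  have hfinal : 3 * Del.card ≤ 2 * (A p).card := by
    calc 3 * Del.card ≤ 3 * ∑ T ∈ 𝒯, (Del ∩ T).card := by omega
    _ = ∑ T ∈ 𝒯, 3 * (Del ∩ T).card := by rw [Finset.mul_sum]
    _ ≤ ∑ T ∈ 𝒯, 2 * T.card := Finset.sum_le_sum hper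
    _ = 2 * ∑ T ∈ 𝒯, T.card := by rw [Finset.mul_sum]
    _ ≤ 2 * (A p).card := by rw [hsum]; omega
  omega


/-- Generic weighted double count. -/
lemma double_count (P Q : Finset V) (K : V → Finset V) (hKQ : ∀ p ∈ P, K p ⊆ Q) (f : V → ℝ) :
    ∑ p ∈ P, ∑ q ∈ K p, f q
      = ∑ q ∈ Q, ((P.filter (fun p => q ∈ K p)).card : ℝ) * f q := by
  classical
  have h1 : ∀ p ∈ P, ∑ q ∈ K p, f q = ∑ q ∈ Q, if q ∈ K p then f q else 0 := by
    intro p hp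
    rw [Finset.sum_ite_mem]
    congr 1
    rw [Finset.inter_eq_right.2 (hKQ p hp)]
  rw [Finset.sum_congr rfl h1, Finset.sum_comm]
  apply Finset.sum_congr rfl
  intro q _
  rw [← Finset.sum_filter, Finset.sum_const, nsmul_eq_mul]

/-- The main path count: at most one path of length 3 between each pair. -/
lemma path_count (P Q : Finset V) (A : V → Finset V) (h6 : NoC6 P A)
    (K : V → Finset V) (hKA : ∀ p ∈ P, K p ⊆ A p) (hKQ : ∀ p ∈ P, K p ⊆ Q)
    (hK2 : ∀ p ∈ P, ∀ p' ∈ P, p ≠ p' → (K p ∩ K p').card ≤ 1)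
    (ρ : ℝ) (hρ1 : 1 ≤ ρ) (hρ : ∀ p ∈ P, ρ ≤ ((K p).card : ℝ)) :
    (ρ - 1) * ∑ q ∈ Q, (((P.filter (fun p => q ∈ K p)).card : ℝ) *
        (((P.filter (fun p => q ∈ K p)).card : ℝ) - 1))
      ≤ (P.card : ℝ) * (Q.card : ℝ) := by
  classical
  set t : V → ℕ := fun q => (P.filter (fun p => q ∈ K p)).card with ht
  set good : (V × V) × V × V → Prop := fun x =>
    x.2.1 ∈ P ∧ x.2.2 ∈ K x.2.1 ∧ x.1.1 ∈ P ∧ x.1.1 ≠ x.2.1 ∧ x.2.2 ∈ K x.1.1 ∧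
      x.1.2 ∈ K x.2.1 ∧ x.1.2 ≠ x.2.2 with hgood
  set S4 : Finset ((V × V) × V × V) := Finset.univ.filter good with hS4
  -- upper bound via injection to (p, q)
  have hupper : S4.card ≤ P.card * Q.card := by
    rw [← Finset.card_product]
    apply Finset.card_le_card_of_injOn (fun x => x.1)
    · rintro ⟨⟨p, q⟩, ⟨p1, q1⟩⟩ hx
      have hg : good ((p, q), (p1, q1)) := (Finset.mem_filter.1 hx).2
      obtain ⟨hp1, hq1K, hpP, hpne, hq1Kp, hqK, hqne⟩ := hg
      exact Finset.mem_product.2 ⟨hpP, hKQ p1 hp1 hqK⟩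
    · rintro ⟨⟨p, q⟩, ⟨p1, q1⟩⟩ hx ⟨⟨p', q'⟩, ⟨p1', q1'⟩⟩ hx' hfeq
      have hg := (Finset.mem_filter.1 (Finset.mem_coe.1 hx)).2
      have hg' := (Finset.mem_filter.1 (Finset.mem_coe.1 hx')).2
      obtain ⟨hp1, hq1K, hpP, hpne, hq1Kp, hqK, hqne⟩ := hg
      obtain ⟨hp1', hq1K', hpP', hpne', hq1Kp', hqK', hqne'⟩ := hg'
      simp only [Prod.mk.injEq] at hfeq ⊢
      obtain ⟨rfl, rfl⟩ := hfeq
      refine ⟨⟨rfl, rfl⟩, ?_⟩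
      -- p, q shared; show (p1, q1) = (p1', q1')
      by_cases hpp : p1 = p1'
      · subst hpp
        by_cases hqq : q1 = q1'
        · exact ⟨rfl, hqq⟩
        · exfalso
          have : 1 < (K p ∩ K p1).card := Finset.one_lt_card.2
            ⟨q1, Finset.mem_inter.2 ⟨hq1Kp, hq1K⟩, q1',
              Finset.mem_inter.2 ⟨hq1Kp', hq1K'⟩, hqq⟩
          have := hK2 p hpP p1 hp1 hpne
          omega
      · by_cases hqq : q1 = q1'
        · exfalso
          subst hqq
          have : 1 < (K p1 ∩ K p1').card := Finset.one_lt_card.2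
            ⟨q1, Finset.mem_inter.2 ⟨hq1K, hq1K'⟩, q,
              Finset.mem_inter.2 ⟨hqK, hqK'⟩, fun h => hqne h.symm⟩
          have := hK2 p1 hp1 p1' hp1' hpp
          omega
        · exfalso
          exact h6 p p1 p1' q1 q q1' hpP hp1 hp1' hpne hpp hpne'
            (fun h => hqne h.symm) hqne' hqq
            (hKA p hpP hq1Kp) (hKA p1 hp1 hq1K)
            (hKA p1 hp1 hqK) (hKA p1' hp1' hqK')
            (hKA p1' hp1' hq1K') (hKA p hpP hq1Kp')
  -- exact fiber count
  have hfib : ∀ z ∈ P ×ˢ Q, (S4.filter (fun x => x.2 = z)).card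
      = if z.2 ∈ K z.1 then (t z.2 - 1) * ((K z.1).card - 1) else 0 := by
    rintro ⟨p1, q1⟩ hz
    have hzP : p1 ∈ P := (Finset.mem_product.1 hz).1
    dsimp only
    by_cases hmem : q1 ∈ K p1
    · rw [if_pos hmem]
      have himage : S4.filter (fun x => x.2 = (p1, q1))
          = (((P.filter (fun p => q1 ∈ K p)).erase p1) ×ˢ ((K p1).erase q1)).image
              (fun pq => (pq, (p1, q1))) := by
        ext ⟨⟨p, q⟩, ⟨pa, qa⟩⟩
        simp only [Finset.mem_filter, Finset.mem_image, Finset.mem_product,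
          Finset.mem_erase, Finset.mem_univ, true_and, Prod.mk.injEq, hS4, hgood]
        constructor
        · rintro ⟨⟨h1, h2, h3, h4, h5, h6', h7⟩, h8, h9⟩
          subst h8; subst h9
          exact ⟨(p, q), ⟨⟨h4, h3, h5⟩, h7, h6'⟩, rfl, rfl, rfl⟩
        · rintro ⟨⟨pb, qb⟩, ⟨⟨hb1, hb2⟩, hb3, hb4⟩, hb5, hb6, hb7⟩
          obtain ⟨e1, e2⟩ := Prod.mk.inj hb5
          subst e1; subst e2; subst hb6; subst hb7
          exact ⟨⟨hzP, hmem, hb2.1, hb1, hb2.2, hb4, hb3⟩, rfl, rfl⟩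
      have hp1f : p1 ∈ P.filter (fun p => q1 ∈ K p) := Finset.mem_filter.2 ⟨hzP, hmem⟩
      rw [himage, Finset.card_image_of_injective _ (fun a b h => (Prod.mk.inj h).1),
        Finset.card_product, Finset.card_erase_of_mem hp1f,
        Finset.card_erase_of_mem hmem]
    · rw [if_neg hmem]
      rw [Finset.card_eq_zero, Finset.eq_empty_iff_forall_notMem]
      rintro ⟨⟨p, q⟩, ⟨pa, qa⟩⟩ hx
      have h1 := Finset.mem_filter.1 hx
      have h2 : (pa, qa) = (p1, q1) := h1.2
      have hg := (Finset.mem_filter.1 h1.1).2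
      rw [h2] at hg
      exact hmem hg.2.1
  have hcardsum : S4.card = ∑ z ∈ P ×ˢ Q, (if z.2 ∈ K z.1 then (t z.2 - 1) * ((K z.1).card - 1) else 0) := by
    rw [Finset.card_eq_sum_card_fiberwise (f := fun x => x.2) (t := P ×ˢ Q)]
    · exact Finset.sum_congr rfl hfib
    · rintro ⟨⟨p, q⟩, ⟨pa, qa⟩⟩ hx
      have hg := (Finset.mem_filter.1 hx).2
      exact Finset.mem_product.2 ⟨hg.1, hKQ pa hg.1 hg.2.1⟩
  have htge : ∀ p1 ∈ P, ∀ q1 ∈ K p1, 1 ≤ t q1 := by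
    intro p1 hp1 q1 hq1
    exact Finset.card_pos.2 ⟨p1, Finset.mem_filter.2 ⟨hp1, hq1⟩⟩
  have hKge : ∀ p1 ∈ P, ∀ q1 ∈ K p1, 1 ≤ (K p1).card := by
    intro p1 _ q1 hq1
    exact Finset.card_pos.2 ⟨q1, hq1⟩
  have hS4real : ∑ p1 ∈ P, ∑ q1 ∈ K p1, (((t q1 : ℝ) - 1) * (((K p1).card : ℝ) - 1))
      = (S4.card : ℝ) := by
    rw [hcardsum, Finset.sum_product]
    push_cast
    apply Finset.sum_congr rfl
    intro p1 hp1
    rw [Finset.sum_ite_mem, Finset.inter_eq_right.2 (hKQ p1 hp1)]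
    apply Finset.sum_congr rfl
    intro q1 hq1
    rw [Nat.cast_sub (htge p1 hp1 q1 hq1), Nat.cast_sub (hKge p1 hp1 q1 hq1)]
    push_cast
    ring
  have hdc := double_count P Q K hKQ (fun q => (t q : ℝ) - 1)
  calc (ρ - 1) * ∑ q ∈ Q, (((P.filter (fun p => q ∈ K p)).card : ℝ) *
        (((P.filter (fun p => q ∈ K p)).card : ℝ) - 1))
      = ∑ p1 ∈ P, ∑ q1 ∈ K p1, (ρ - 1) * ((t q1 : ℝ) - 1) := by
        rw [← hdc, Finset.mul_sum]
        apply Finset.sum_congr rfl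
        intro p1 _
        rw [Finset.mul_sum]
    _ ≤ ∑ p1 ∈ P, ∑ q1 ∈ K p1, ((t q1 : ℝ) - 1) * (((K p1).card : ℝ) - 1) := by
        apply Finset.sum_le_sum
        intro p1 hp1
        apply Finset.sum_le_sum
        intro q1 hq1
        rw [mul_comm (ρ - 1)]
        apply mul_le_mul_of_nonneg_left
        · have := hρ p1 hp1
          linarith
        · have := htge p1 hp1 q1 hq1
          have : (1 : ℝ) ≤ (t q1 : ℝ) := by exact_mod_cast this
          linarith
    _ = (S4.card : ℝ) := hS4real
    _ ≤ (P.card : ℝ) * (Q.card : ℝ) := by exact_mod_cast hupper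


lemma arith (E N a S SA r : ℝ) (hr : 60 ≤ r) (hN1 : 1 ≤ N) (ha0 : 0 ≤ a) (hE0 : 0 ≤ E)
    (hCS : E ^ 2 ≤ N * S) (hPC' : (r / 3 - 1) * (S - E) ≤ a * N)
    (haE : a * (r / 3) ≤ E) (hSA : SA ≤ 3 * E) :
    SA < 64 * (N + N ^ 2 / r ^ 2) ∧ a < 64 * (N / r + N ^ 2 / r ^ 3) := by
  have hmain : 3 * E * r ^ 2 < 64 * N * r ^ 2 + 64 * N ^ 2 := by
    have hr3 : (0 : ℝ) < r - 3 := by linarith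
    have hr0 : (0 : ℝ) < r := by linarith
    have hNpos : (0 : ℝ) < N := by linarith
    have hkey : r * (r - 3) * (E - N) ≤ 9 * N ^ 2 := by
      rcases eq_or_lt_of_le hE0 with hE0' | hE0'
      · have c : 0 ≤ r * ((r - 3) * N) :=
          mul_nonneg (by linarith) (mul_nonneg (by linarith) (by linarith))
        have e : r * (r - 3) * (E - N) = -(r * ((r - 3) * N)) := by
          rw [← hE0']; ring
        have c2 : 0 ≤ 9 * N ^ 2 := by positivity
        linarith
      · have s1 : E ^ 2 - E * N ≤ N * S - E * N := by linarith [hCS]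
        have h1 : (r / 3 - 1) * (E ^ 2 - E * N) ≤ a * N ^ 2 := by
          calc (r / 3 - 1) * (E ^ 2 - E * N)
              ≤ (r / 3 - 1) * (N * S - E * N) :=
                mul_le_mul_of_nonneg_left s1 (by linarith)
            _ = N * ((r / 3 - 1) * (S - E)) := by ring
            _ ≤ N * (a * N) := mul_le_mul_of_nonneg_left hPC' (by linarith)
            _ = a * N ^ 2 := by ring
        have h3 : (r / 3) * ((r / 3 - 1) * (E ^ 2 - E * N)) ≤ E * N ^ 2 := by
          calc (r / 3) * ((r / 3 - 1) * (E ^ 2 - E * N))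
              ≤ (r / 3) * (a * N ^ 2) := mul_le_mul_of_nonneg_left h1 (by linarith)
            _ = (a * (r / 3)) * N ^ 2 := by ring
            _ ≤ E * N ^ 2 := mul_le_mul_of_nonneg_right haE (by positivity)
        have h3' : E * ((r / 3) * ((r / 3 - 1) * (E - N))) ≤ E * N ^ 2 := by
          calc E * ((r / 3) * ((r / 3 - 1) * (E - N)))
              = (r / 3) * ((r / 3 - 1) * (E ^ 2 - E * N)) := by ring
            _ ≤ E * N ^ 2 := h3
        have h6' : (r / 3) * ((r / 3 - 1) * (E - N)) ≤ N ^ 2 :=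
          le_of_mul_le_mul_left h3' hE0'
        have e : r * (r - 3) * (E - N) = 9 * ((r / 3) * ((r / 3 - 1) * (E - N))) := by ring
        linarith
    have h5 := mul_le_mul_of_nonneg_left hkey (show (0 : ℝ) ≤ 3 * r by linarith)
    have hA : (r - 3) * (3 * E * r ^ 2) ≤ (r - 3) * (3 * N * r ^ 2) + 27 * r * N ^ 2 := by
      nlinarith [h5]
    have c1 : 0 < (r - 3) * (N * r ^ 2) := mul_pos hr3 (mul_pos hNpos (by positivity))
    have c2 : 0 < (37 * r - 192) * N ^ 2 := mul_pos (by linarith) (by positivity)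
    have hB : (r - 3) * (3 * N * r ^ 2) + 27 * r * N ^ 2
        < (r - 3) * (64 * N * r ^ 2 + 64 * N ^ 2) := by nlinarith [c1, c2]
    have hC : (r - 3) * (3 * E * r ^ 2) < (r - 3) * (64 * N * r ^ 2 + 64 * N ^ 2) := by
      linarith
    exact lt_of_mul_lt_mul_left hC (le_of_lt hr3)
  have hr3 : (0 : ℝ) < r - 3 := by linarith
  have hr0 : (0 : ℝ) < r := by linarith
  constructor
  · have heq : 64 * (N + N ^ 2 / r ^ 2) = (64 * N * r ^ 2 + 64 * N ^ 2) / r ^ 2 := by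
      field_simp
    rw [heq, lt_div_iff₀ (by positivity)]
    have m1 : SA * r ^ 2 ≤ 3 * E * r ^ 2 :=
      mul_le_mul_of_nonneg_right hSA (by positivity)
    linarith
  · have heq : 64 * (N / r + N ^ 2 / r ^ 3) = (64 * N * r ^ 2 + 64 * N ^ 2) / r ^ 3 := by
      field_simp
    rw [heq, lt_div_iff₀ (by positivity)]
    have h7 : a * r ≤ 3 * E := by linarith [haE]
    have m1 : a * r * r ^ 2 ≤ 3 * E * r ^ 2 :=
      mul_le_mul_of_nonneg_right h7 (by positivity)
    have e : a * r ^ 3 = a * r * r ^ 2 := by ring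
    linarith


theorem core (P Q : Finset V) (A : V → Finset V)
    (hAQ : ∀ p ∈ P, A p ⊆ Q)
    (h6 : NoC6 P A)
    (n : ℕ) (hn : Q.card = n) (hn1 : 1 ≤ n)
    (r : ℝ) (hr : 60 ≤ r)
    (hdeg : ∀ p ∈ P, r ≤ ((A p).card : ℝ)) :
    (∑ p ∈ P, ((A p).card : ℝ)) < 64 * ((n : ℝ) + (n : ℝ) ^ 2 / r ^ 2) ∧
    (P.card : ℝ) < 64 * ((n : ℝ) / r + (n : ℝ) ^ 2 / r ^ 3) := by
  classical
  set K : V → Finset V := KS P A with hK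
  have hKA : ∀ p ∈ P, K p ⊆ A p := fun p _ => KS_subset
  have hKQ : ∀ p ∈ P, K p ⊆ Q := fun p hp => Finset.Subset.trans KS_subset (hAQ p hp)
  have hK2' : ∀ p ∈ P, ∀ p' ∈ P, p ≠ p' → (K p ∩ K p').card ≤ 1 :=
    fun p hp p' hp' hne => K2 h6 hp hp' hne
  set t : V → ℕ := fun q => (P.filter (fun p => q ∈ K p)).card with ht
  set E : ℝ := ∑ q ∈ Q, (t q : ℝ) with hE
  set N : ℝ := (n : ℝ) with hN
  set a : ℝ := (P.card : ℝ) with ha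
  have hN1 : (1 : ℝ) ≤ N := by rw [hN]; exact_mod_cast hn1
  have hρ1 : (1 : ℝ) ≤ r / 3 := by linarith
  have hρK : ∀ p ∈ P, r / 3 ≤ ((K p).card : ℝ) := by
    intro p hp
    have h1 := K_card h6 hp
    have h2 := hdeg p hp
    have h3 : ((A p).card : ℝ) ≤ 3 * ((K p).card : ℝ) := by exact_mod_cast h1
    linarith
  -- E equals the number of kept edges
  have hEsum : ∑ p ∈ P, ((K p).card : ℝ) = E := by
    rw [hE]
    have := double_count P Q K hKQ (fun _ => (1 : ℝ))
    simp only [Finset.sum_const, nsmul_eq_mul, mul_one] at this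
    exact this
  have haE : a * (r / 3) ≤ E := by
    rw [← hEsum, ha]
    calc (P.card : ℝ) * (r / 3) = ∑ _p ∈ P, (r / 3) := by
          rw [Finset.sum_const, nsmul_eq_mul]
      _ ≤ ∑ p ∈ P, ((K p).card : ℝ) := Finset.sum_le_sum hρK
  have hSA : ∑ p ∈ P, ((A p).card : ℝ) ≤ 3 * E := by
    rw [← hEsum, Finset.mul_sum]
    apply Finset.sum_le_sum
    intro p hp
    have := K_card h6 hp
    exact_mod_cast this
  -- Cauchy-Schwarz
  have hCS : E ^ 2 ≤ N * ∑ q ∈ Q, (t q : ℝ) ^ 2 := by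
    have := sq_sum_le_card_mul_sum_sq (s := Q) (f := fun q => (t q : ℝ))
    rw [hn] at this
    exact this
  -- path count
  have hPC : (r / 3 - 1) * ∑ q ∈ Q, ((t q : ℝ) * ((t q : ℝ) - 1)) ≤ a * N := by
    have := path_count P Q A h6 K hKA hKQ hK2' (r / 3) hρ1 hρK
    rw [hn] at this
    exact this
  have hsplit : ∑ q ∈ Q, ((t q : ℝ) * ((t q : ℝ) - 1))
      = (∑ q ∈ Q, (t q : ℝ) ^ 2) - E := by
    rw [hE, ← Finset.sum_sub_distrib]
    apply Finset.sum_congr rfl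
    intro q _
    ring
  -- finish via the arithmetic lemma
  have hE0 : 0 ≤ E := by
    rw [hE]
    exact Finset.sum_nonneg fun q _ => Nat.cast_nonneg _
  have ha0 : 0 ≤ a := by rw [ha]; exact Nat.cast_nonneg _
  set S : ℝ := ∑ q ∈ Q, (t q : ℝ) ^ 2 with hS
  have hPC' : (r / 3 - 1) * (S - E) ≤ a * N := by
    rw [hS, ← hsplit]; exact hPC
  exact arith E N a S (∑ p ∈ P, ((A p).card : ℝ)) r hr hN1 ha0 hE0 hCS hPC' haE hSA


end Stmt6Aux

open Stmt6Aux

/-- A bipartite graph with parts `P` and `Q` (which partition the vertex set), where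
every vertex of `P` has degree at least `r ≥ 60`, `|Q| = n ≥ 1`, and which contains no
cycle of length 6, has fewer than `64 (n + n²/r²)` edges and `|P| < 64 (n/r + n²/r³)`. -/
theorem stmt6 {V : Type*} [Fintype V] [DecidableEq V] (F : SimpleGraph V)
    [DecidableRel F.Adj]
    (P Q : Finset V) (hdisj : Disjoint P Q) (hcover : P ∪ Q = Finset.univ)
    (hbip : ∀ u v, F.Adj u v → (u ∈ P ∧ v ∈ Q) ∨ (u ∈ Q ∧ v ∈ P))
    (n : ℕ) (hn : Q.card = n) (hn1 : 1 ≤ n)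
    (r : ℝ) (hr : 60 ≤ r)
    (hdeg : ∀ v ∈ P, r ≤ (F.degree v : ℝ))
    (hC6 : ¬ ∃ x : Fin 6 → V, Function.Injective x ∧ ∀ i : Fin 6, F.Adj (x i) (x (i + 1))) :
    (F.edgeFinset.card : ℝ) < 64 * ((n : ℝ) + (n : ℝ) ^ 2 / r ^ 2) ∧
      (P.card : ℝ) < 64 * ((n : ℝ) / r + (n : ℝ) ^ 2 / r ^ 3) := by
  classical
  set A : V → Finset V := fun v => F.neighborFinset v with hA
  have hAQ : ∀ p ∈ P, A p ⊆ Q := by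
    intro p hp v hv
    rw [hA, SimpleGraph.mem_neighborFinset] at hv
    rcases hbip p v hv with ⟨_, h⟩ | ⟨h, _⟩
    · exact h
    · exact absurd h (Finset.disjoint_left.1 hdisj hp)
  have hQP : ∀ q ∈ Q, A q ⊆ P := by
    intro q hq v hv
    rw [hA, SimpleGraph.mem_neighborFinset] at hv
    rcases hbip q v hv with ⟨h, _⟩ | ⟨_, h⟩
    · exact absurd hq (Finset.disjoint_left.1 hdisj h)
    · exact h
  have hPQne : ∀ x ∈ P, ∀ y ∈ Q, x ≠ y := by
    intro x hx y hy h
    exact Finset.disjoint_left.1 hdisj hx (h ▸ hy)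
  -- no structured C6
  have h6 : NoC6 P A := by
    intro pa pb pc qa qb qc hpa hpb hpc hab hbc hac hqab hqbc hqac ha1 ha2 hb1 hb2 hc1 hc2
    rw [hA, SimpleGraph.mem_neighborFinset] at ha1 ha2 hb1 hb2 hc1 hc2
    have hQa : qa ∈ Q := hAQ pa hpa (by rw [hA, SimpleGraph.mem_neighborFinset]; exact ha1)
    have hQb : qb ∈ Q := hAQ pb hpb (by rw [hA, SimpleGraph.mem_neighborFinset]; exact hb1)
    have hQc : qc ∈ Q := hAQ pc hpc (by rw [hA, SimpleGraph.mem_neighborFinset]; exact hc1)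
    have n1 : pa ≠ qa := hPQne pa hpa qa hQa
    have n2 : pa ≠ qb := hPQne pa hpa qb hQb
    have n3 : pa ≠ qc := hPQne pa hpa qc hQc
    have n4 : pb ≠ qa := hPQne pb hpb qa hQa
    have n5 : pb ≠ qb := hPQne pb hpb qb hQb
    have n6 : pb ≠ qc := hPQne pb hpb qc hQc
    have n7 : pc ≠ qa := hPQne pc hpc qa hQa
    have n8 : pc ≠ qb := hPQne pc hpc qb hQb
    have n9 : pc ≠ qc := hPQne pc hpc qc hQc
    apply hC6
    refine ⟨![pa, qa, pb, qb, pc, qc], ?_, ?_⟩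
    · intro i j hij
      fin_cases i <;> fin_cases j <;>
        first
          | rfl
          | (exfalso; simp only [Matrix.cons_val_zero, Matrix.cons_val_one, Matrix.head_cons,
              Matrix.cons_val_two, Matrix.tail_cons, Matrix.cons_val_three,
              Matrix.cons_val_four, Matrix.cons_val_fin_one] at hij;
             first
               | exact hab hij | exact hbc hij | exact hac hij
               | exact hqab hij | exact hqbc hij | exact hqac hij
               | exact n1 hij | exact n2 hij | exact n3 hij
               | exact n4 hij | exact n5 hij | exact n6 hij
               | exact n7 hij | exact n8 hij | exact n9 hij
               | exact hab hij.symm | exact hbc hij.symm | exact hac hij.symm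
               | exact hqab hij.symm | exact hqbc hij.symm | exact hqac hij.symm
               | exact n1 hij.symm | exact n2 hij.symm | exact n3 hij.symm
               | exact n4 hij.symm | exact n5 hij.symm | exact n6 hij.symm
               | exact n7 hij.symm | exact n8 hij.symm | exact n9 hij.symm)
    · intro i
      fin_cases i
      · exact ha1
      · exact ha2.symm
      · exact hb1
      · exact hb2.symm
      · exact hc1
      · exact hc2.symm
  -- edge count identities
  have hdeg_eq : ∀ p ∈ P, F.degree p = ∑ q ∈ Q, if F.Adj p q then 1 else 0 := by
    intro p hp
    rw [← SimpleGraph.card_neighborFinset_eq_degree]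
    have heq : F.neighborFinset p = Q.filter (fun q => F.Adj p q) := by
      ext v
      simp only [SimpleGraph.mem_neighborFinset, Finset.mem_filter]
      exact ⟨fun h => ⟨hAQ p hp (by rw [hA, SimpleGraph.mem_neighborFinset]; exact h), h⟩,
        fun h => h.2⟩
    rw [heq, Finset.card_filter]
  have hdeg_eq' : ∀ q ∈ Q, F.degree q = ∑ p ∈ P, if F.Adj p q then 1 else 0 := by
    intro q hq
    rw [← SimpleGraph.card_neighborFinset_eq_degree]
    have heq : F.neighborFinset q = P.filter (fun p => F.Adj p q) := by
      ext v
      simp only [SimpleGraph.mem_neighborFinset, Finset.mem_filter]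
      constructor
      · intro h
        exact ⟨hQP q hq (by rw [hA, SimpleGraph.mem_neighborFinset]; exact h), h.symm⟩
      · intro h
        exact h.2.symm
    rw [heq, Finset.card_filter]
  have hsum_eq : ∑ p ∈ P, F.degree p = ∑ q ∈ Q, F.degree q := by
    rw [Finset.sum_congr rfl hdeg_eq, Finset.sum_congr rfl hdeg_eq', Finset.sum_comm]
  have htwice : ∑ v, F.degree v = 2 * F.edgeFinset.card :=
    SimpleGraph.sum_degrees_eq_twice_card_edges F
  have hsplitsum : ∑ v, F.degree v = ∑ p ∈ P, F.degree p + ∑ q ∈ Q, F.degree q := by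
    rw [← hcover, Finset.sum_union hdisj]
  have hedges : F.edgeFinset.card = ∑ p ∈ P, F.degree p := by omega
  -- apply the core theorem
  have hcore := core P Q A hAQ h6 n hn hn1 r hr
    (by intro p hp
        have := hdeg p hp
        rw [hA]
        rwa [SimpleGraph.card_neighborFinset_eq_degree])
  constructor
  · have : (F.edgeFinset.card : ℝ) = ∑ p ∈ P, ((A p).card : ℝ) := by
      rw [hedges]
      push_cast
      apply Finset.sum_congr rfl
      intro p _
      rw [hA, SimpleGraph.card_neighborFinset_eq_degree]
    rw [this]
    exact hcore.1
  · exact hcore.2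
end

section
/- Let G be a finite simple graph with a coloring φ : V(G) → {1,2,3,4}. For every edge e = {u,v} with φ(u) ≠ φ(v), letting {c,d} = {1,2,3,4} \ {φ(u),φ(v)}, define k_c(e) as the number of common neighbors w of u and v with φ(w) = c, and define y_e = k_c(e)·k_d(e). Then the sum of y_e over all edges e whose endpoints have distinct colors equals 6·s + t, where s is the number of colorful K₄'s in G and t is the number of colorful induced diamonds in G. -/
variable {V : Type*} [Fintype V] [DecidableEq V]

def kcount (G : SimpleGraph V) [DecidableRel G.Adj] (φ : V → Fin 4) (c : Fin 4)
    (u v : V) : ℕ :=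
  (Finset.univ.filter fun w => G.Adj u w ∧ G.Adj v w ∧ φ w = c).card

/-- When `φ u ≠ φ v` and `{c, d} = {1,2,3,4} \ {φ u, φ v}`, this is `k_c(e) · k_d(e)`. -/
def ypair (G : SimpleGraph V) [DecidableRel G.Adj] (φ : V → Fin 4) (u v : V) : ℕ :=
  ∏ c ∈ (Finset.univ \ {φ u, φ v}), kcount G φ c u v

theorem ypair_symm (G : SimpleGraph V) [DecidableRel G.Adj] (φ : V → Fin 4) (u v : V) :
    ypair G φ u v = ypair G φ v u := by
  unfold ypair
  rw [Finset.pair_comm (φ u) (φ v)]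
  refine Finset.prod_congr rfl fun c _ => ?_
  unfold kcount
  congr 1
  ext w
  simp only [Finset.mem_filter]
  tauto

def yedge (G : SimpleGraph V) [DecidableRel G.Adj] (φ : V → Fin 4) : Sym2 V → ℕ :=
  Sym2.lift ⟨ypair G φ, ypair_symm G φ⟩

open Finset

section FourVertices

variable {W : Type*} [Fintype W] [DecidableEq W] {H : SimpleGraph W} {a b c d : W}

lemma IsDiamond.insert_eq_univ (hW : Fintype.card W = 4) (h : IsDiamond H a b c d) :
    ({a, b, c, d} : Finset W) = univ := by
  obtain ⟨hab, hac, had, hbc, hbd, hcd, -⟩ := h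
  rw [← card_eq_iff_eq_univ, hW, card_eq_four]
  exact ⟨a, b, c, d, hab, hac, had, hbc, hbd, hcd, rfl⟩

lemma IsDiamond.isUniversal_iff (hW : Fintype.card W = 4) (h : IsDiamond H a b c d) (x : W) :
    H.IsUniversal x ↔ x = a ∨ x = b := by
  have hx : ∀ y, y = a ∨ y = b ∨ y = c ∨ y = d := fun y => by
    simpa [← h.insert_eq_univ hW] using mem_univ y
  obtain ⟨hab, hac, had, hbc, hbd, hcd, hAab, hAac, hAad, hAbc, hAbd, hAcd⟩ := h
  constructor
  · intro hu
    rcases hx x with rfl | rfl | rfl | rfl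
    · exact Or.inl rfl
    · exact Or.inr rfl
    · exact absurd (hu hcd) hAcd
    · exact absurd (hu hcd.symm).symm hAcd
  · rintro (rfl | rfl) y hy <;> rcases hx y with rfl | rfl | rfl | rfl
    all_goals first | exact absurd rfl hy | assumption | exact SimpleGraph.Adj.symm ‹_›

namespace SimpleGraph

variable (H) [DecidablePred H.IsUniversal]

omit [DecidableEq W] in
lemma filter_isUniversal_eq_univ_iff : univ.filter H.IsUniversal = univ ↔ H = ⊤ := by
  simp [filter_eq_self, IsUniversal, ← isClique_univ, IsClique, Set.Pairwise]

lemma card_filter_isUniversal_add_one_ne :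
    #(univ.filter H.IsUniversal) + 1 ≠ Fintype.card W := by
  intro h
  obtain ⟨z, hz⟩ : ∃ z, (univ.filter H.IsUniversal)ᶜ = {z} := by
    rw [← card_eq_one, card_compl]
    omega
  have isUniversal_iff : ∀ w, H.IsUniversal w ↔ w ≠ z := fun w => by
    rw [← mem_filter_univ (p := H.IsUniversal), ← notMem_compl, hz, mem_singleton]
  -- every other vertex is universal, hence adjacent to `z`
  have hz_univ : H.IsUniversal z := fun w hzw =>
    ((isUniversal_iff w).2 (Ne.symm hzw) hzw.symm).symm
  exact (isUniversal_iff z).1 hz_univ rfl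

lemma card_filter_isUniversal_eq_two_iff (hW : Fintype.card W = 4) :
    #(univ.filter H.IsUniversal) = 2 ↔ ∃ a b c d, IsDiamond H a b c d := by
  constructor
  · intro hU
    obtain ⟨a, b, hab, hUab⟩ := card_eq_two.1 hU
    obtain ⟨c, d, hcd, hUcd⟩ :
        ∃ c d, c ≠ d ∧ (univ.filter H.IsUniversal)ᶜ = {c, d} := by
      rw [← card_eq_two, card_compl]
      omega
    have isUniversal_iff : ∀ x, H.IsUniversal x ↔ x = a ∨ x = b := fun x => by
      rw [← mem_filter_univ (p := H.IsUniversal), hUab, mem_insert, mem_singleton]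
    have not_isUniversal_iff : ∀ x, ¬ H.IsUniversal x ↔ x = c ∨ x = d := fun x => by
      rw [← mem_filter_univ (p := H.IsUniversal), ← mem_compl, hUcd, mem_insert, mem_singleton]
    have ha := (isUniversal_iff a).2 (Or.inl rfl)
    have hb := (isUniversal_iff b).2 (Or.inr rfl)
    have hc := (not_isUniversal_iff c).2 (Or.inl rfl)
    have hd := (not_isUniversal_iff d).2 (Or.inr rfl)
    obtain ⟨w, hcw, hAcw⟩ : ∃ w, c ≠ w ∧ ¬ H.Adj c w := by simpa [IsUniversal] using hc
    have hwd : w = d := by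
      have hw : ¬ H.IsUniversal w := fun hw => hAcw (hw hcw.symm).symm
      exact ((not_isUniversal_iff w).1 hw).resolve_left hcw.symm
    have ne_of : ∀ {x y}, H.IsUniversal x → ¬ H.IsUniversal y → x ≠ y :=
      fun hx hy hxy => hy (hxy ▸ hx)
    exact ⟨a, b, c, d, hab, ne_of ha hc, ne_of ha hd, ne_of hb hc, ne_of hb hd, hcd, ha hab,
      ha (ne_of ha hc), ha (ne_of ha hd), hb (ne_of hb hc), hb (ne_of hb hd), hwd ▸ hAcw⟩
  · rintro ⟨a, b, c, d, h⟩
    have hU : univ.filter H.IsUniversal = {a, b} := by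
      ext x
      simp [h.isUniversal_iff hW]
    rw [hU, card_pair h.1]

lemma card_offDiag_filter_isUniversal (hW : Fintype.card W = 4) :
    #(univ.filter H.IsUniversal).offDiag =
      12 * (if #(univ.filter H.IsUniversal) = 4 then 1 else 0) +
        2 * (if #(univ.filter H.IsUniversal) = 2 then 1 else 0) := by
  have hne := H.card_filter_isUniversal_add_one_ne
  have hle := card_le_univ (univ.filter H.IsUniversal)
  rw [offDiag_card]
  rw [hW] at hne hle
  generalize #(univ.filter H.IsUniversal) = m at *
  interval_cases m <;> simp_all

end SimpleGraph

end FourVertices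

namespace SimpleGraph

variable {W : Type*} (G : SimpleGraph V)

omit [Fintype V] in
lemma isClique_coe_image_univ_iff [Fintype W] {f : W → V} (hf : Function.Injective f) :
    G.IsClique (univ.image f : Set V) ↔ G.comap f = ⊤ := by
  rw [← isClique_univ]
  simp [IsClique, Set.Pairwise, hf.ne_iff]

omit [Fintype V] [DecidableEq V] in
lemma isDiamond_comap_iff {f : W → V} (hf : Function.Injective f) {a b c d : W} :
    IsDiamond (G.comap f) a b c d ↔ IsDiamond G (f a) (f b) (f c) (f d) := by
  simp [IsDiamond, hf.ne_iff]

omit [Fintype V] in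
lemma exists_isDiamond_image_univ_iff [Fintype W] [DecidableEq W] (hW : Fintype.card W = 4) {f : W → V}
    (hf : Function.Injective f) :
    (∃ a b c d, univ.image f = {a, b, c, d} ∧ IsDiamond G a b c d) ↔
      ∃ a b c d, IsDiamond (G.comap f) a b c d := by
  constructor
  · rintro ⟨a, b, c, d, himg, h⟩
    have mem_range : ∀ x ∈ ({a, b, c, d} : Finset V), ∃ i, f i = x := fun x hx => by
      rw [← himg] at hx
      simpa using hx
    obtain ⟨a, rfl⟩ := mem_range a (by simp)
    obtain ⟨b, rfl⟩ := mem_range b (by simp)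
    obtain ⟨c, rfl⟩ := mem_range c (by simp)
    obtain ⟨d, rfl⟩ := mem_range d (by simp)
    exact ⟨a, b, c, d, (isDiamond_comap_iff G hf).2 h⟩
  · rintro ⟨a, b, c, d, h⟩
    refine ⟨f a, f b, f c, f d, ?_, (isDiamond_comap_iff G hf).1 h⟩
    rw [← h.insert_eq_univ hW]
    simp [image_insert]

variable [DecidableRel G.Adj]

omit [DecidableEq V] in
lemma two_nsmul_sum_edgeFinset {M : Type*} [AddCommMonoid M] (g : Sym2 V → M) :
    2 • ∑ e ∈ G.edgeFinset, g e =
      ∑ p ∈ univ.filter (fun p : V × V => G.Adj p.1 p.2), g s(p.1, p.2) := by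
  classical
  calc 2 • ∑ e ∈ G.edgeFinset, g e
      = ∑ e ∈ G.edgeFinset, ∑ d ∈ univ.filter (fun d : G.Dart => d.edge = e), g d.edge := by
        rw [smul_sum]
        refine sum_congr rfl fun e he => ?_
        rw [sum_congr rfl fun d hd => by rw [(mem_filter.1 hd).2], sum_const,
          G.dart_edge_fiber_card e (mem_edgeFinset.1 he)]
    _ = ∑ d : G.Dart, g d.edge :=
        sum_fiberwise_of_maps_to (fun d _ => mem_edgeFinset.2 d.edge_mem) _
    _ = _ := sum_bij' (fun d _ => d.toProd) (fun p hp => ⟨p, (mem_filter.1 hp).2⟩)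
        (by simp) (by simp) (by simp) (by simp) (by simp [Dart.edge])

end SimpleGraph

section Colorful

variable (G : SimpleGraph V) [DecidableRel G.Adj] (φ : V → Fin 4)

def colorSections : Finset (Fin 4 → V) := univ.filter fun f => ∀ i, φ (f i) = i

def bichromaticDarts : Finset (V × V) := univ.filter fun p => G.Adj p.1 p.2 ∧ φ p.1 ≠ φ p.2

omit [DecidableEq V] in
lemma injective_of_mem_colorSections {f : Fin 4 → V} (hf : f ∈ colorSections φ) :
    Function.Injective f :=
  Function.LeftInverse.injective (g := φ) (mem_filter.1 hf).2

lemma card_filter_powersetCard_eq_card_filter_colorSections (Q : Finset V → Prop)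
    [DecidablePred Q] :
    #((univ.powersetCard 4).filter fun S => Q S ∧ #(S.image φ) = 4) =
      #((colorSections φ).filter fun f => Q (univ.image f)) := by
  symm
  refine card_bij (fun f _ => univ.image f) (fun f hf => ?_) (fun f hf g hg hfg => ?_) ?_
  · obtain ⟨hf, hQ⟩ := mem_filter.1 hf
    have hφf : φ ∘ f = id := funext (mem_filter.1 hf).2
    simp [card_image_of_injective _ (injective_of_mem_colorSections φ hf),
      hQ, image_image, hφf]
  · have hf' := (mem_filter.1 (mem_filter.1 hf).1).2
    have hg' := (mem_filter.1 (mem_filter.1 hg).1).2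
    funext i
    obtain ⟨j, -, hj⟩ := mem_image.1 (hfg ▸ mem_image_of_mem f (mem_univ i))
    rw [← hj, ← hf' i, ← hj, hg' j]
  · intro S hS
    obtain ⟨hS4, hQ, hSφ⟩ := by simpa [mem_powersetCard_univ] using hS
    have himg : S.image φ = univ := eq_univ_of_card _ (by simpa using hSφ)
    choose f hf_mem hφf using fun i => mem_image.1 (himg ▸ mem_univ i)
    have hf : f ∈ colorSections φ := mem_filter.2 ⟨mem_univ f, hφf⟩
    have hfS : univ.image f = S :=
      eq_of_subset_of_card_le (image_subset_iff.2 fun i _ => hf_mem i)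
        (by rw [hS4, card_image_of_injective _ (injective_of_mem_colorSections φ hf)]; simp)
    exact ⟨f, mem_filter.2 ⟨hf, hfS ▸ hQ⟩, hfS⟩

def commonNeighborChoices (u v : V) (c : Fin 4) : Finset V :=
  if c = φ u then {u} else if c = φ v then {v} else
    univ.filter fun w => G.Adj u w ∧ G.Adj v w ∧ φ w = c

omit [DecidableEq V] in
lemma ypair_eq_card_piFinset (u v : V) :
    ypair G φ u v = #(Fintype.piFinset (commonNeighborChoices G φ u v)) := by
  rw [ypair, Fintype.card_piFinset, ← prod_subset (sdiff_subset (s := univ) (t := {φ u, φ v}))]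
  · refine prod_congr rfl fun c hc => ?_
    obtain ⟨hcu, hcv⟩ : c ≠ φ u ∧ c ≠ φ v := by simpa using hc
    simp [commonNeighborChoices, kcount, hcu, hcv]
  · intro c _ hc
    obtain rfl | rfl : c = φ u ∨ c = φ v := by simp at hc; tauto
    all_goals unfold commonNeighborChoices; split_ifs <;> simp_all

omit [DecidableEq V] in
variable {G φ} in
lemma mem_piFinset_commonNeighborChoices {u v : V} (h : φ u ≠ φ v) {f : Fin 4 → V} :
    f ∈ Fintype.piFinset (commonNeighborChoices G φ u v) ↔
      f ∈ colorSections φ ∧ f (φ u) = u ∧ f (φ v) = v ∧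
        ∀ k, k ≠ φ u → k ≠ φ v → G.Adj u (f k) ∧ G.Adj v (f k) := by
  simp only [Fintype.mem_piFinset, colorSections, mem_filter, mem_univ, true_and]
  constructor
  · intro hf
    have hu : f (φ u) = u := by simpa [commonNeighborChoices] using hf (φ u)
    have hv : f (φ v) = v := by simpa [commonNeighborChoices, Ne.symm h] using hf (φ v)
    have hk :
        ∀ k, k ≠ φ u → k ≠ φ v → G.Adj u (f k) ∧ G.Adj v (f k) ∧ φ (f k) = k :=
      fun k hku hkv => by simpa [commonNeighborChoices, hku, hkv] using hf k
    refine ⟨fun k => ?_, hu, hv, fun k hku hkv => ⟨(hk k hku hkv).1, (hk k hku hkv).2.1⟩⟩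
    by_cases hku : k = φ u
    · rw [hku, hu]
    by_cases hkv : k = φ v
    · rw [hkv, hv]
    exact (hk k hku hkv).2.2
  · rintro ⟨hφf, hu, hv, hk⟩ c
    unfold commonNeighborChoices
    split_ifs with hcu hcv
    · simp [hcu, hu]
    · simp [hcv, hv]
    · simpa [hφf c] using hk c hcu hcv

open Classical in
lemma card_filter_bichromaticDarts_eq_card_offDiag {f : Fin 4 → V} (hf : f ∈ colorSections φ) :
    #((bichromaticDarts G φ).filter fun p =>
        f ∈ Fintype.piFinset (commonNeighborChoices G φ p.1 p.2)) =
      #(univ.filter (G.comap f).IsUniversal).offDiag := by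
  have hφf : ∀ i, φ (f i) = i := (mem_filter.1 hf).2
  refine card_nbij' (fun p => (φ p.1, φ p.2)) (fun q => (f q.1, f q.2)) ?_ ?_ ?_ ?_
  · rintro ⟨u, v⟩ hp
    simp only [coe_filter, bichromaticDarts, mem_filter, mem_univ, true_and] at hp
    obtain ⟨⟨hadj, hne⟩, hmem⟩ := hp
    obtain ⟨-, hu, hv, hk⟩ := (mem_piFinset_commonNeighborChoices hne).1 hmem
    have isUniversal : ∀ {x y}, G.Adj x y → f (φ x) = x → f (φ y) = y →
        (∀ k, k ≠ φ x → k ≠ φ y → G.Adj x (f k)) →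
          (G.comap f).IsUniversal (φ x) := by
      intro x y hxy hx hy hk k hxk
      rw [SimpleGraph.comap_adj, hx]
      by_cases hky : k = φ y
      · rwa [hky, hy]
      · exact hk k (Ne.symm hxk) hky
    simp only [coe_offDiag, Set.mem_offDiag, coe_filter, mem_univ, true_and]
    exact ⟨isUniversal hadj hu hv fun k hku hkv => (hk k hku hkv).1,
      isUniversal hadj.symm hv hu fun k hkv hku => (hk k hku hkv).2, hne⟩
  · rintro ⟨i, j⟩ hq
    simp only [coe_offDiag, Set.mem_offDiag, coe_filter, mem_univ, true_and] at hq
    obtain ⟨hi, hj, hij⟩ := hq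
    have hne : φ (f i) ≠ φ (f j) := by rwa [hφf, hφf]
    simp only [coe_filter, bichromaticDarts, mem_filter, mem_univ, true_and]
    refine ⟨⟨hi hij, hne⟩, (mem_piFinset_commonNeighborChoices hne).2
      ⟨hf, by rw [hφf], by rw [hφf], fun k hki hkj => ⟨hi ?_, hj ?_⟩⟩⟩
    · rw [hφf] at hki; exact Ne.symm hki
    · rw [hφf] at hkj; exact Ne.symm hkj
  · rintro ⟨u, v⟩ hp
    simp only [coe_filter, bichromaticDarts, mem_filter, mem_univ, true_and] at hp
    obtain ⟨-, hu, hv, -⟩ := (mem_piFinset_commonNeighborChoices hp.1.2).1 hp.2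
    simp [hu, hv]
  · rintro ⟨i, j⟩ -
    simp [hφf]

open Classical in
lemma sum_ypair_eq_sum_card_offDiag :
    ∑ p ∈ bichromaticDarts G φ, ypair G φ p.1 p.2 =
      ∑ f ∈ colorSections φ, #(univ.filter (G.comap f).IsUniversal).offDiag := by
  calc ∑ p ∈ bichromaticDarts G φ, ypair G φ p.1 p.2
      = ∑ p ∈ bichromaticDarts G φ, #((colorSections φ).filter fun f =>
          f ∈ Fintype.piFinset (commonNeighborChoices G φ p.1 p.2)) := by
        refine sum_congr rfl fun p hp => ?_
        rw [ypair_eq_card_piFinset, filter_mem_eq_inter, inter_eq_right.2]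
        exact fun f hf => ((mem_piFinset_commonNeighborChoices (mem_filter.1 hp).2.2).1 hf).1
    _ = ∑ f ∈ colorSections φ, #((bichromaticDarts G φ).filter fun p =>
          f ∈ Fintype.piFinset (commonNeighborChoices G φ p.1 p.2)) :=
        sum_card_bipartiteAbove_eq_sum_card_bipartiteBelow _
    _ = _ := sum_congr rfl fun f hf => card_filter_bichromaticDarts_eq_card_offDiag G φ hf

lemma two_mul_sum_yedge :
    2 * ∑ e ∈ G.edgeFinset.filter (fun e => ¬ (Sym2.map φ e).IsDiag), yedge G φ e =
      ∑ p ∈ bichromaticDarts G φ, ypair G φ p.1 p.2 := by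
  rw [sum_filter, ← smul_eq_mul, G.two_nsmul_sum_edgeFinset, ← sum_filter]
  refine sum_congr ?_ fun p _ => rfl
  ext p
  simp [bichromaticDarts]

open Classical in
lemma sum_card_offDiag_filter_isUniversal_eq :
    ∑ f ∈ colorSections φ, #(univ.filter (G.comap f).IsUniversal).offDiag =
      12 * #((colorSections φ).filter fun f => G.IsClique (univ.image f : Set V)) +
        2 * #((colorSections φ).filter fun f =>
          ∃ a b c d, univ.image f = {a, b, c, d} ∧ IsDiamond G a b c d) := by
  rw [sum_congr rfl fun f _ => (G.comap f).card_offDiag_filter_isUniversal (Fintype.card_fin 4),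
    sum_add_distrib, ← mul_sum, ← mul_sum, sum_boole, sum_boole, Nat.cast_id, Nat.cast_id]
  have hclique : ∀ f ∈ colorSections φ, #(univ.filter (G.comap f).IsUniversal) = 4 ↔
      G.IsClique (univ.image f : Set V) := fun f hf => by
    rw [G.isClique_coe_image_univ_iff (injective_of_mem_colorSections φ hf),
      ← SimpleGraph.filter_isUniversal_eq_univ_iff, ← card_eq_iff_eq_univ, Fintype.card_fin]
  have hdiamond : ∀ f ∈ colorSections φ, #(univ.filter (G.comap f).IsUniversal) = 2 ↔
      ∃ a b c d, univ.image f = {a, b, c, d} ∧ IsDiamond G a b c d := fun f hf => by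
    rw [SimpleGraph.card_filter_isUniversal_eq_two_iff _ (Fintype.card_fin 4),
      G.exists_isDiamond_image_univ_iff (Fintype.card_fin 4) (injective_of_mem_colorSections φ hf)]
  rw [filter_congr hclique, filter_congr hdiamond]

end Colorful

open Classical in
/-- The sum of `y_e` over all edges whose endpoints have distinct colors equals
`6 s + t`, where `s` is the number of colorful `K₄`'s and `t` is the number of
colorful induced diamonds. -/
theorem stmt7 (G : SimpleGraph V) [DecidableRel G.Adj] (φ : V → Fin 4)
    (s t : ℕ)
    (hs : s = ((Finset.univ.powersetCard 4).filter
        (fun S : Finset V => G.IsClique (S : Set V) ∧ (S.image φ).card = 4)).card)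
    (ht : t = ((Finset.univ.powersetCard 4).filter
        (fun S : Finset V => (∃ a b c d, S = {a, b, c, d} ∧ IsDiamond G a b c d) ∧
          (S.image φ).card = 4)).card) :
    ∑ e ∈ G.edgeFinset.filter (fun e => ¬ (Sym2.map φ e).IsDiag), yedge G φ e
      = 6 * s + t := by
  have key : 2 * ∑ e ∈ G.edgeFinset.filter (fun e => ¬ (Sym2.map φ e).IsDiag), yedge G φ e
      = 12 * s + 2 * t := by
    rw [two_mul_sum_yedge, sum_ypair_eq_sum_card_offDiag, sum_card_offDiag_filter_isUniversal_eq,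
      hs, ht, card_filter_powersetCard_eq_card_filter_colorSections,
      card_filter_powersetCard_eq_card_filter_colorSections]
  omega
end

section
/- Let F be a finite bipartite graph with parts A and B and m ≥ 1 edges, and suppose there is an integer d ≥ 1 such that every vertex of A has degree at least d and at most 2d. Let p₁, p₂ ∈ [0,1], and define Λ₁ = exp(−m·p₁/(2d)) if p₁ < 1 and Λ₁ = 0 if p₁ = 1, and Λ₂ = exp(−d·p₂) if p₂ < 1 and Λ₂ = 0 if p₂ = 1. If each vertex of A is kept independently with probability p₁ and each vertex of B is kept independently with probability p₂, then the probability that some edge of F has both endpoints kept is at least (1 − Λ₁)·(1 − Λ₂). -/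
open Finset

/-- Sum over powerset of a disjoint union splits as a double sum. -/
lemma sum_powerset_union_aux {α : Type*} [DecidableEq α] {A B : Finset α} (h : Disjoint A B)
    (f : Finset α → ℝ) :
    ∑ S ∈ (A ∪ B).powerset, f S = ∑ T ∈ A.powerset, ∑ U ∈ B.powerset, f (T ∪ U) := by
  rw [← Finset.sum_product']
  refine Finset.sum_nbij' (fun S => (S ∩ A, S ∩ B)) (fun P => P.1 ∪ P.2) ?_ ?_ ?_ ?_ ?_
  · intro S hS
    simp only [Finset.mem_product, Finset.mem_powerset]
    exact ⟨Finset.inter_subset_right, Finset.inter_subset_right⟩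
  · intro P hP
    simp only [Finset.mem_product, Finset.mem_powerset] at hP ⊢
    exact Finset.union_subset_union hP.1 hP.2
  · intro S hS
    simp only [Finset.mem_powerset] at hS
    show S ∩ A ∪ S ∩ B = S
    rw [← Finset.inter_union_distrib_left, Finset.inter_eq_left.mpr hS]
  · intro P hP
    simp only [Finset.mem_product, Finset.mem_powerset] at hP
    have h1 : (P.1 ∪ P.2) ∩ A = P.1 := by
      rw [Finset.union_inter_distrib_right, Finset.inter_eq_left.mpr hP.1,
        Finset.disjoint_iff_inter_eq_empty.mp (Finset.disjoint_of_subset_left hP.2 h.symm),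
        Finset.union_empty]
    have h2 : (P.1 ∪ P.2) ∩ B = P.2 := by
      rw [Finset.union_inter_distrib_right, Finset.inter_eq_left.mpr hP.2,
        Finset.disjoint_iff_inter_eq_empty.mp (Finset.disjoint_of_subset_left hP.1 h),
        Finset.empty_union]
    show ((P.1 ∪ P.2) ∩ A, (P.1 ∪ P.2) ∩ B) = P
    rw [h1, h2]
  · intro S hS
    simp only [Finset.mem_powerset] at hS
    have hS' : S ∩ A ∪ S ∩ B = S := by
      rw [← Finset.inter_union_distrib_left, Finset.inter_eq_left.mpr hS]
    show f S = f (S ∩ A ∪ S ∩ B)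
    rw [hS']

/-- The total weight of subsets of `B` missing `C` is `(1-q)^|C|`. -/
lemma miss_sum_aux {α : Type*} [DecidableEq α] (B C : Finset α) (hC : C ⊆ B) (q : ℝ) :
    ∑ U ∈ B.powerset, q ^ U.card * (1 - q) ^ (B \ U).card *
      (if (U ∩ C).Nonempty then 0 else 1) = (1 - q) ^ C.card := by
  have h := Finset.prod_add (fun v => if v ∈ C then (0:ℝ) else q) (fun _ => (1:ℝ) - q) B
  have hl : ∏ v ∈ B, ((if v ∈ C then (0:ℝ) else q) + (1 - q)) = (1 - q) ^ C.card := by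
    rw [← Finset.prod_sdiff hC]
    have h1 : ∏ v ∈ B \ C, ((if v ∈ C then (0:ℝ) else q) + (1 - q)) = 1 := by
      apply Finset.prod_eq_one
      intro v hv
      rw [if_neg (Finset.mem_sdiff.mp hv).2]; ring
    have h2 : ∏ v ∈ C, ((if v ∈ C then (0:ℝ) else q) + (1 - q)) = (1 - q) ^ C.card := by
      rw [Finset.prod_congr rfl (fun v hv => by rw [if_pos hv, zero_add]),
        Finset.prod_const]
    rw [h1, h2, one_mul]
  rw [hl] at h
  rw [h]
  refine Finset.sum_congr rfl fun U hU => ?_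
  have hprod : ∏ v ∈ U, (if v ∈ C then (0:ℝ) else q) =
      q ^ U.card * (if (U ∩ C).Nonempty then 0 else 1) := by
    by_cases hne : (U ∩ C).Nonempty
    · rw [if_pos hne, mul_zero]
      obtain ⟨v, hv⟩ := hne
      rw [Finset.mem_inter] at hv
      exact Finset.prod_eq_zero hv.1 (if_pos hv.2)
    · rw [if_neg hne, mul_one]
      have : ∀ v ∈ U, v ∉ C := by
        intro v hv hvc
        exact hne ⟨v, Finset.mem_inter.mpr ⟨hv, hvc⟩⟩
      rw [Finset.prod_congr rfl (fun v hv => if_neg (this v hv)), Finset.prod_const]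
  rw [hprod, Finset.prod_const]
  ring

/-- The total weight of subsets of `B` hitting `C` is `1 - (1-q)^|C|`. -/
lemma hit_sum_aux {α : Type*} [DecidableEq α] (B C : Finset α) (hC : C ⊆ B) (q : ℝ) :
    ∑ U ∈ B.powerset, q ^ U.card * (1 - q) ^ (B \ U).card *
      (if (U ∩ C).Nonempty then 1 else 0) = 1 - (1 - q) ^ C.card := by
  have htot : ∑ U ∈ B.powerset, q ^ U.card * (1 - q) ^ (B \ U).card = 1 := by
    have h0 := miss_sum_aux B ∅ (Finset.empty_subset B) q
    simpa using h0
  have key : ∀ U ∈ B.powerset,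
      q ^ U.card * (1 - q) ^ (B \ U).card * (if (U ∩ C).Nonempty then (1:ℝ) else 0) =
      q ^ U.card * (1 - q) ^ (B \ U).card -
      q ^ U.card * (1 - q) ^ (B \ U).card * (if (U ∩ C).Nonempty then 0 else 1) := by
    intro U _
    by_cases hne : (U ∩ C).Nonempty <;> simp [hne]
  rw [Finset.sum_congr rfl key, Finset.sum_sub_distrib, htot, miss_sum_aux B C hC q]

/-- Each vertex class of a bipartite graph carries total degree equal to the edge count. -/
lemma degA_sum {V : Type*} [Fintype V] [DecidableEq V] (F : SimpleGraph V) [DecidableRel F.Adj]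
    (A B : Finset V) (hdisj : Disjoint A B)
    (hbip : ∀ u v, F.Adj u v → (u ∈ A ∧ v ∈ B) ∨ (u ∈ B ∧ v ∈ A)) :
    ∑ v ∈ A, F.degree v = F.edgeFinset.card := by
  have key : ∀ e ∈ F.edgeFinset, (A.filter (fun v => v ∈ e)).card = 1 := by
    intro e
    induction e using Sym2.ind with
    | _ u v =>
      intro he
      rw [SimpleGraph.mem_edgeFinset, SimpleGraph.mem_edgeSet] at he
      rcases hbip u v he with ⟨hu, hv⟩ | ⟨hu, hv⟩
      · have : A.filter (fun x => x ∈ (s(u, v) : Sym2 V)) = {u} := by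
          ext x
          simp only [Finset.mem_filter, Sym2.mem_iff, Finset.mem_singleton]
          constructor
          · rintro ⟨hx, rfl | rfl⟩
            · rfl
            · exact absurd hv (Finset.disjoint_left.mp hdisj hx)
          · rintro rfl; exact ⟨hu, Or.inl rfl⟩
        rw [this, Finset.card_singleton]
      · have : A.filter (fun x => x ∈ (s(u, v) : Sym2 V)) = {v} := by
          ext x
          simp only [Finset.mem_filter, Sym2.mem_iff, Finset.mem_singleton]
          constructor
          · rintro ⟨hx, rfl | rfl⟩
            · exact absurd hu (Finset.disjoint_left.mp hdisj hx)
            · rfl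
          · rintro rfl; exact ⟨hv, Or.inr rfl⟩
        rw [this, Finset.card_singleton]
  calc ∑ v ∈ A, F.degree v
      = ∑ v ∈ A, (F.edgeFinset.filter (fun e => v ∈ e)).card := by
        refine Finset.sum_congr rfl fun v _ => ?_
        rw [← F.card_incidenceFinset_eq_degree, F.incidenceFinset_eq_filter]
    _ = ∑ v ∈ A, ∑ e ∈ F.edgeFinset, if v ∈ e then 1 else 0 :=
        Finset.sum_congr rfl fun v _ => Finset.card_filter _ _
    _ = ∑ e ∈ F.edgeFinset, ∑ v ∈ A, if v ∈ e then 1 else 0 := Finset.sum_comm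
    _ = ∑ e ∈ F.edgeFinset, 1 := Finset.sum_congr rfl (fun e he => by
        rw [← Finset.card_filter]; exact key e he)
    _ = F.edgeFinset.card := by simp



open Classical in
/-- The probability that a `p`-random subset `S` of a finite type satisfies `Q`:
each element `v` is included independently with probability `p v`. -/
noncomputable def prRandom {α : Type*} [Fintype α] [DecidableEq α] (p : α → ℝ)
    (Q : Finset α → Prop) : ℝ :=
  ∑ S ∈ (Finset.univ : Finset α).powerset,
    (∏ v ∈ S, p v) * (∏ v ∈ Finset.univ \ S, (1 - p v)) * (if Q S then 1 else 0)

/-- Bipartite graph `F` with parts `A`, `B`, `m ≥ 1` edges, every vertex of `A` of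
degree between `d` and `2d`. If each vertex of `A` is kept independently with
probability `p₁` and each vertex of `B` with probability `p₂`, the probability that
some edge survives is at least `(1 - Λ₁)(1 - Λ₂)`. -/
theorem stmt10 {V : Type*} [Fintype V] [DecidableEq V] (F : SimpleGraph V)
    [DecidableRel F.Adj]
    (A B : Finset V) (hdisj : Disjoint A B) (hcover : A ∪ B = Finset.univ)
    (hbip : ∀ u v, F.Adj u v → (u ∈ A ∧ v ∈ B) ∨ (u ∈ B ∧ v ∈ A))
    (m : ℕ) (hm : m = F.edgeFinset.card) (hm1 : 1 ≤ m)
    (d : ℕ) (hd : 1 ≤ d)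
    (hdeg : ∀ v ∈ A, d ≤ F.degree v ∧ F.degree v ≤ 2 * d)
    (p₁ p₂ : ℝ) (hp₁ : p₁ ∈ Set.Icc (0 : ℝ) 1) (hp₂ : p₂ ∈ Set.Icc (0 : ℝ) 1)
    (Λ₁ Λ₂ : ℝ)
    (hΛ₁ : Λ₁ = if p₁ < 1 then Real.exp (-((m : ℝ) * p₁) / (2 * d)) else 0)
    (hΛ₂ : Λ₂ = if p₂ < 1 then Real.exp (-((d : ℝ) * p₂)) else 0) :
    (1 - Λ₁) * (1 - Λ₂) ≤
      prRandom (fun v => if v ∈ A then p₁ else p₂)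
        (fun S => ∃ u v, F.Adj u v ∧ u ∈ S ∧ v ∈ S) := by
  obtain ⟨hp₁0, hp₁1⟩ := hp₁
  obtain ⟨hp₂0, hp₂1⟩ := hp₂
  have hd0 : (0:ℝ) < d := by exact_mod_cast hd
  have hΛ₂0 : 0 ≤ Λ₂ := by
    rw [hΛ₂]; split
    · exact (Real.exp_pos _).le
    · exact le_refl 0
  have hΛ₂1 : Λ₂ ≤ 1 := by
    rw [hΛ₂]; split
    · exact Real.exp_le_one_iff.mpr (by nlinarith)
    · linarith
  have h1Λ₂ : (0:ℝ) ≤ 1 - Λ₂ := by linarith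
  -- counting
  have hdegsum : ∑ v ∈ A, F.degree v = m := by
    rw [hm]; exact degA_sum F A B hdisj hbip
  have hAm : m ≤ 2 * d * A.card := by
    calc m = ∑ v ∈ A, F.degree v := hdegsum.symm
      _ ≤ ∑ _v ∈ A, 2 * d := Finset.sum_le_sum (fun v hv => (hdeg v hv).2)
      _ = 2 * d * A.card := by rw [Finset.sum_const, smul_eq_mul, mul_comm]
  have hA1 : 1 ≤ A.card := by
    by_contra hcon
    have : A.card = 0 := by omega
    rw [this] at hAm; omega
  -- pow bounds
  have hpow₂d : (1 - p₂) ^ d ≤ Λ₂ := by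
    by_cases hlt : p₂ < 1
    · rw [hΛ₂, if_pos hlt]
      calc (1 - p₂) ^ d ≤ Real.exp (-p₂) ^ d := by
            apply pow_le_pow_left₀ (by linarith)
            have := Real.add_one_le_exp (-p₂); linarith
        _ = Real.exp (-((d:ℝ) * p₂)) := by rw [← Real.exp_nat_mul]; congr 1; ring
    · have hp1 : p₂ = 1 := le_antisymm hp₂1 (not_lt.mp hlt)
      rw [hΛ₂, if_neg hlt, hp1, sub_self, zero_pow (by omega : d ≠ 0)]
  have hpow₁ : (1 - p₁) ^ A.card ≤ Λ₁ := by
    by_cases hlt : p₁ < 1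
    · rw [hΛ₁, if_pos hlt]
      calc (1 - p₁) ^ A.card ≤ Real.exp (-p₁) ^ A.card := by
            apply pow_le_pow_left₀ (by linarith)
            have := Real.add_one_le_exp (-p₁); linarith
        _ = Real.exp (-((A.card : ℝ) * p₁)) := by rw [← Real.exp_nat_mul]; congr 1; ring
        _ ≤ Real.exp (-((m : ℝ) * p₁) / (2 * d)) := by
            apply Real.exp_le_exp.mpr
            rw [neg_div, neg_le_neg_iff, div_le_iff₀ (by positivity : (0:ℝ) < 2 * d)]
            have hAmR : (m : ℝ) ≤ 2 * d * A.card := by exact_mod_cast hAm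
            nlinarith [mul_le_mul_of_nonneg_right hAmR hp₁0]
    · have hp1 : p₁ = 1 := le_antisymm hp₁1 (not_lt.mp hlt)
      rw [hΛ₁, if_neg hlt, hp1, sub_self, zero_pow (by omega : A.card ≠ 0)]
  -- split the probability as a double sum
  have hPv : ∀ v : V, (fun v => if v ∈ A then p₁ else p₂) v = if v ∈ A then p₁ else p₂ :=
    fun _ => rfl
  have hsplit : prRandom (fun v => if v ∈ A then p₁ else p₂)
      (fun S => ∃ u v, F.Adj u v ∧ u ∈ S ∧ v ∈ S)
      = ∑ T ∈ A.powerset, ∑ U ∈ B.powerset,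
          (p₁ ^ T.card * (1 - p₁) ^ (A \ T).card) *
          ((p₂ ^ U.card * (1 - p₂) ^ (B \ U).card) *
            (if ∃ u v, F.Adj u v ∧ u ∈ T ∪ U ∧ v ∈ T ∪ U then (1:ℝ) else 0)) := by
    rw [prRandom, show (Finset.univ : Finset V) = A ∪ B from hcover.symm,
      sum_powerset_union_aux hdisj]
    refine Finset.sum_congr rfl fun T hT => Finset.sum_congr rfl fun U hU => ?_
    rw [Finset.mem_powerset] at hT hU
    have e1 : ∏ v ∈ T ∪ U, (if v ∈ A then p₁ else p₂) = p₁ ^ T.card * p₂ ^ U.card := by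
      rw [Finset.prod_union (hdisj.mono hT hU)]
      congr 1
      · rw [Finset.prod_congr rfl fun v hv => if_pos (hT hv), Finset.prod_const]
      · rw [Finset.prod_congr rfl
          (fun v hv => if_neg (Finset.disjoint_right.mp hdisj (hU hv))), Finset.prod_const]
    have e2 : (A ∪ B) \ (T ∪ U) = (A \ T) ∪ (B \ U) := by
      ext v
      simp only [Finset.mem_sdiff, Finset.mem_union, not_or]
      constructor
      · rintro ⟨hv | hv, hnT, hnU⟩
        · exact Or.inl ⟨hv, hnT⟩
        · exact Or.inr ⟨hv, hnU⟩
      · rintro (⟨hv, hnT⟩ | ⟨hv, hnU⟩)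
        · exact ⟨Or.inl hv, hnT, fun hU' => Finset.disjoint_left.mp hdisj hv (hU hU')⟩
        · exact ⟨Or.inr hv, fun hT' => Finset.disjoint_right.mp hdisj hv (hT hT'), hnU⟩
    have e3 : ∏ v ∈ (A \ T) ∪ (B \ U), (1 - (if v ∈ A then p₁ else p₂))
        = (1 - p₁) ^ (A \ T).card * (1 - p₂) ^ (B \ U).card := by
      rw [Finset.prod_union (hdisj.mono Finset.sdiff_subset Finset.sdiff_subset)]
      congr 1
      · rw [Finset.prod_congr rfl
          (fun v hv => by rw [if_pos (Finset.mem_sdiff.mp hv).1]), Finset.prod_const]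
      · rw [Finset.prod_congr rfl (fun v hv => by
          rw [if_neg (Finset.disjoint_right.mp hdisj (Finset.mem_sdiff.mp hv).1)]),
          Finset.prod_const]
    rw [e2, e1, e3]
    by_cases hQ : ∃ u v, F.Adj u v ∧ u ∈ T ∪ U ∧ v ∈ T ∪ U
    · simp only [hQ, if_true, iff_true]; ring
    · simp only [hQ, if_false]; ring
  -- inner bound
  have hinner : ∀ T ∈ A.powerset,
      (p₁ ^ T.card * (1 - p₁) ^ (A \ T).card) * (if T.Nonempty then (1 - Λ₂) else 0) ≤
      ∑ U ∈ B.powerset, (p₁ ^ T.card * (1 - p₁) ^ (A \ T).card) *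
        ((p₂ ^ U.card * (1 - p₂) ^ (B \ U).card) *
          (if ∃ u v, F.Adj u v ∧ u ∈ T ∪ U ∧ v ∈ T ∪ U then (1:ℝ) else 0)) := by
    intro T hT
    rw [Finset.mem_powerset] at hT
    rw [← Finset.mul_sum]
    have hwA : 0 ≤ p₁ ^ T.card * (1 - p₁) ^ (A \ T).card :=
      mul_nonneg (pow_nonneg hp₁0 _) (pow_nonneg (by linarith) _)
    apply mul_le_mul_of_nonneg_left ?_ hwA
    by_cases hTne : T.Nonempty
    · rw [if_pos hTne]
      obtain ⟨a, ha⟩ := hTne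
      have haA : a ∈ A := hT ha
      have hCB : F.neighborFinset a ⊆ B := by
        intro b hb
        rw [SimpleGraph.mem_neighborFinset] at hb
        rcases hbip a b hb with ⟨_, h2⟩ | ⟨h1, _⟩
        · exact h2
        · exact absurd h1 (Finset.disjoint_left.mp hdisj haA)
      have hCd : d ≤ (F.neighborFinset a).card := by
        rw [F.card_neighborFinset_eq_degree]; exact (hdeg a haA).1
      calc 1 - Λ₂ ≤ 1 - (1 - p₂) ^ (F.neighborFinset a).card := by
            have h1 : (1 - p₂) ^ (F.neighborFinset a).card ≤ (1 - p₂) ^ d :=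
              pow_le_pow_of_le_one (by linarith) (by linarith) hCd
            linarith
        _ = ∑ U ∈ B.powerset, p₂ ^ U.card * (1 - p₂) ^ (B \ U).card *
              (if (U ∩ F.neighborFinset a).Nonempty then (1:ℝ) else 0) :=
            (hit_sum_aux B (F.neighborFinset a) hCB p₂).symm
        _ ≤ ∑ U ∈ B.powerset, (p₂ ^ U.card * (1 - p₂) ^ (B \ U).card) *
              (if ∃ u v, F.Adj u v ∧ u ∈ T ∪ U ∧ v ∈ T ∪ U then (1:ℝ) else 0) := by
            apply Finset.sum_le_sum
            intro U hU
            have hwB : 0 ≤ p₂ ^ U.card * (1 - p₂) ^ (B \ U).card :=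
              mul_nonneg (pow_nonneg hp₂0 _) (pow_nonneg (by linarith) _)
            by_cases hhit : (U ∩ F.neighborFinset a).Nonempty
            · have hQ : ∃ u v, F.Adj u v ∧ u ∈ T ∪ U ∧ v ∈ T ∪ U := by
                obtain ⟨b, hb⟩ := hhit
                rw [Finset.mem_inter, SimpleGraph.mem_neighborFinset] at hb
                exact ⟨a, b, hb.2, Finset.mem_union_left _ ha,
                  Finset.mem_union_right _ hb.1⟩
              rw [if_pos hhit, if_pos hQ]
            · rw [if_neg hhit, mul_zero]
              exact mul_nonneg hwB (by split <;> norm_num)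
    · rw [if_neg hTne]
      apply Finset.sum_nonneg
      intro U hU
      have hwB : 0 ≤ p₂ ^ U.card * (1 - p₂) ^ (B \ U).card :=
        mul_nonneg (pow_nonneg hp₂0 _) (pow_nonneg (by linarith) _)
      exact mul_nonneg hwB (by split <;> norm_num)
  -- outer sum evaluates
  have houter : ∑ T ∈ A.powerset,
      (p₁ ^ T.card * (1 - p₁) ^ (A \ T).card) * (if T.Nonempty then (1 - Λ₂) else 0)
      = (1 - (1 - p₁) ^ A.card) * (1 - Λ₂) := by
    have hcongr : ∀ T ∈ A.powerset,
        (p₁ ^ T.card * (1 - p₁) ^ (A \ T).card) * (if T.Nonempty then (1 - Λ₂) else 0)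
        = p₁ ^ T.card * (1 - p₁) ^ (A \ T).card *
            (if (T ∩ A).Nonempty then (1:ℝ) else 0) * (1 - Λ₂) := by
      intro T hT
      rw [Finset.mem_powerset] at hT
      rw [Finset.inter_eq_left.mpr hT]
      by_cases h : T.Nonempty
      · rw [if_pos h, if_pos h]; ring
      · rw [if_neg h, if_neg h]; ring
    rw [Finset.sum_congr rfl hcongr, ← Finset.sum_mul,
      hit_sum_aux A A (subset_refl A) p₁]
  -- conclude
  calc (1 - Λ₁) * (1 - Λ₂) ≤ (1 - (1 - p₁) ^ A.card) * (1 - Λ₂) :=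
        mul_le_mul_of_nonneg_right (by linarith) h1Λ₂
    _ = ∑ T ∈ A.powerset,
        (p₁ ^ T.card * (1 - p₁) ^ (A \ T).card) * (if T.Nonempty then (1 - Λ₂) else 0) :=
        houter.symm
    _ ≤ ∑ T ∈ A.powerset, ∑ U ∈ B.powerset,
        (p₁ ^ T.card * (1 - p₁) ^ (A \ T).card) *
        ((p₂ ^ U.card * (1 - p₂) ^ (B \ U).card) *
          (if ∃ u v, F.Adj u v ∧ u ∈ T ∪ U ∧ v ∈ T ∪ U then (1:ℝ) else 0)) :=
        Finset.sum_le_sum hinner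
    _ = _ := hsplit.symm
end

section
/- Let r ≥ 1 be a real number, and let H be a finite simple graph with m edges, where r ≤ m, whose maximum degree is at most √(r·m). Let q = √(r/m) (so 0 < q ≤ 1), and keep each vertex of H independently with probability q. Then the probability that the induced subgraph on the kept vertices contains at least one edge is at least 1/4. -/
open Finset

lemma keyA {V : Type*} [Fintype V] [DecidableEq V] (q : ℝ) (T : Finset V) :
    ∑ S ∈ (univ : Finset V).powerset,
      (∏ _v ∈ S, q) * (∏ _v ∈ univ \ S, (1 - q)) * (if T ⊆ S then (1:ℝ) else 0)
      = q ^ T.card := by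
  classical
  have hstep : ∀ S ∈ (univ : Finset V).powerset,
      (∏ _v ∈ S, q) * (∏ _v ∈ univ \ S, (1 - q)) * (if T ⊆ S then (1:ℝ) else 0)
      = (∏ _v ∈ S, q) * ∏ v ∈ univ \ S, (if v ∈ T then 0 else 1 - q) := by
    intro S _
    by_cases h : T ⊆ S
    · rw [if_pos h, mul_one]
      congr 1
      refine prod_congr rfl fun v hv => ?_
      rw [if_neg (fun hvT => (mem_sdiff.1 hv).2 (h hvT))]
    · rw [if_neg h, mul_zero]
      obtain ⟨v, hvT, hvS⟩ := not_subset.1 h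
      have hz : ∏ v ∈ univ \ S, (if v ∈ T then (0:ℝ) else 1 - q) = 0 :=
        prod_eq_zero (mem_sdiff.2 ⟨mem_univ v, hvS⟩) (if_pos hvT)
      rw [hz, mul_zero]
  rw [sum_congr rfl hstep, ← prod_add]
  rw [← prod_mul_prod_compl T fun v => (q + if v ∈ T then 0 else 1 - q)]
  have h1 : ∏ v ∈ T, (q + if v ∈ T then 0 else 1 - q) = q ^ T.card := by
    rw [prod_congr rfl fun v hv => by rw [if_pos hv, add_zero], prod_const]
  have h2 : ∏ v ∈ Tᶜ, (q + if v ∈ T then 0 else 1 - q) = 1 := by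
    rw [prod_congr rfl fun v hv => ?_, prod_const_one]
    rw [if_neg (mem_compl.1 hv)]; ring
  rw [h1, h2, mul_one]

lemma cardFst {V : Type*} [Fintype V] [DecidableEq V] (H : SimpleGraph V)
    [DecidableRel H.Adj] (u : V) :
    (((univ : Finset (V × V)).filter fun p => H.Adj p.1 p.2).filter
      fun p => p.1 = u).card = H.degree u := by
  have he : ((univ : Finset (V × V)).filter fun p => H.Adj p.1 p.2).filter
      (fun p => p.1 = u) = {u} ×ˢ H.neighborFinset u := by
    ext p
    simp only [mem_filter, mem_univ, true_and, mem_product, mem_singleton,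
      SimpleGraph.mem_neighborFinset]
    constructor
    · rintro ⟨h1, h2⟩; exact ⟨h2, h2 ▸ h1⟩
    · rintro ⟨h1, h2⟩; exact ⟨h1 ▸ h2, h1⟩
  rw [he, Finset.card_product, card_singleton, one_mul,
    SimpleGraph.card_neighborFinset_eq_degree]

lemma cardSnd {V : Type*} [Fintype V] [DecidableEq V] (H : SimpleGraph V)
    [DecidableRel H.Adj] (u : V) :
    (((univ : Finset (V × V)).filter fun p => H.Adj p.1 p.2).filter
      fun p => p.2 = u).card = H.degree u := by
  have he : ((univ : Finset (V × V)).filter fun p => H.Adj p.1 p.2).filter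
      (fun p => p.2 = u) = H.neighborFinset u ×ˢ {u} := by
    ext p
    simp only [mem_filter, mem_univ, true_and, mem_product, mem_singleton,
      SimpleGraph.mem_neighborFinset]
    constructor
    · rintro ⟨h1, h2⟩; exact ⟨(h2 ▸ h1).symm, h2⟩
    · rintro ⟨h1, h2⟩; exact ⟨h2 ▸ h1.symm, h2⟩
  rw [he, Finset.card_product, card_singleton, mul_one,
    SimpleGraph.card_neighborFinset_eq_degree]

/-- If `H` has `m` edges with `1 ≤ r ≤ m` and maximum degree at most `√(r·m)`, and
each vertex is kept independently with probability `q = √(r/m)`, then the kept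
vertices contain an edge with probability at least `1/4`. -/
theorem stmt11 {V : Type*} [Fintype V] [DecidableEq V] (H : SimpleGraph V)
    [DecidableRel H.Adj]
    (r : ℝ) (hr : 1 ≤ r)
    (m : ℕ) (hm : m = H.edgeFinset.card) (hrm : r ≤ (m : ℝ))
    (hΔ : ∀ v, (H.degree v : ℝ) ≤ Real.sqrt (r * m))
    (q : ℝ) (hq : q = Real.sqrt (r / m)) :
    (1 : ℝ) / 4 ≤
      prRandom (fun _ => q) (fun S => ∃ u v, H.Adj u v ∧ u ∈ S ∧ v ∈ S) := by
  classical
  set Q : Finset V → Prop := fun S => ∃ u v, H.Adj u v ∧ u ∈ S ∧ v ∈ S with hQdef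
  have hr0 : (0:ℝ) < r := lt_of_lt_of_le one_pos hr
  have hm1 : (1:ℝ) ≤ (m:ℝ) := le_trans hr hrm
  have hm0 : (0:ℝ) < (m:ℝ) := lt_of_lt_of_le one_pos hm1
  have hrm0 : (0:ℝ) ≤ r / m := div_nonneg hr0.le hm0.le
  have hq0 : 0 ≤ q := hq ▸ Real.sqrt_nonneg _
  have hq2 : q ^ 2 = r / m := by rw [hq, Real.sq_sqrt hrm0]
  have hq1 : q ≤ 1 := by
    rw [hq]; exact Real.sqrt_le_one.2 ((div_le_one hm0).2 hrm)
  have hqrm : q * Real.sqrt (r * m) = r := by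
    rw [hq, ← Real.sqrt_mul hrm0]
    have : r / m * (r * m) = r * r := by field_simp
    rw [this, Real.sqrt_mul_self hr0.le]
  -- the measure
  set μ : Finset V → ℝ := fun S => (∏ _v ∈ S, q) * ∏ _v ∈ univ \ S, (1 - q) with hμdef
  have hμ0 : ∀ S, 0 ≤ μ S := fun S =>
    mul_nonneg (prod_nonneg fun _ _ => hq0) (prod_nonneg fun _ _ => by linarith)
  -- the directed edge set
  set D : Finset (V × V) := (univ : Finset (V × V)).filter (fun p => H.Adj p.1 p.2)
    with hDdef
  have hDadj : ∀ p ∈ D, H.Adj p.1 p.2 := fun p hp => (mem_filter.1 hp).2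
  have hDcardN : D.card = 2 * m := by
    have h2 : D = (univ : Finset (V × V)).filter fun (x, y) => H.Adj x y := by
      ext ⟨x, y⟩; simp [hDdef]
    rw [hm, SimpleGraph.two_mul_card_edgeFinset, h2]
  have hDcard : (D.card : ℝ) = 2 * (m:ℝ) := by rw [hDcardN]; push_cast; ring
  set T : V × V → Finset V := fun p => {p.1, p.2} with hTdef
  have hTcard : ∀ p ∈ D, (T p).card = 2 := fun p hp => card_pair (hDadj p hp).ne
  set X : Finset V → ℝ := fun S => ∑ p ∈ D, (if T p ⊆ S then (1:ℝ) else 0) with hXdef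
  have hX0 : ∀ S, 0 ≤ X S := fun S => sum_nonneg fun p _ => by positivity
  have hXQ : ∀ S, ¬ Q S → X S = 0 := by
    intro S hQS
    refine sum_eq_zero fun p hp => ?_
    rw [if_neg]
    intro hsub
    exact hQS ⟨p.1, p.2, hDadj p hp,
      hsub (mem_insert_self _ _), hsub (mem_insert_of_mem (mem_singleton_self _))⟩
  -- first moment
  have hEp : ∀ p ∈ D, ∑ S ∈ (univ : Finset V).powerset,
      μ S * (if T p ⊆ S then (1:ℝ) else 0) = q ^ 2 := by
    intro p hp
    have := keyA q (T p)
    rw [hTcard p hp] at this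
    rw [← this]
  have E1 : ∑ S ∈ (univ : Finset V).powerset, μ S * X S = 2 * r := by
    calc ∑ S ∈ (univ : Finset V).powerset, μ S * X S
        = ∑ S ∈ (univ : Finset V).powerset, ∑ p ∈ D,
            μ S * (if T p ⊆ S then (1:ℝ) else 0) := by
          exact sum_congr rfl fun S _ => by rw [hXdef, mul_sum]
      _ = ∑ p ∈ D, ∑ S ∈ (univ : Finset V).powerset,
            μ S * (if T p ⊆ S then (1:ℝ) else 0) := sum_comm
      _ = ∑ p ∈ D, q ^ 2 := sum_congr rfl hEp
      _ = 2 * r := by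
          rw [sum_const, nsmul_eq_mul, hDcard, hq2]
          field_simp
  -- pair probabilities
  have hpair : ∀ (p p' : V × V) (S : Finset V),
      (if T p ⊆ S then (1:ℝ) else 0) * (if T p' ⊆ S then (1:ℝ) else 0)
      = (if T p ∪ T p' ⊆ S then (1:ℝ) else 0) := by
    intro p p' S
    simp only [union_subset_iff]
    by_cases hA : T p ⊆ S <;> by_cases hB : T p' ⊆ S <;> simp [hA, hB]
  have hEpp : ∀ (p p' : V × V), ∑ S ∈ (univ : Finset V).powerset,
      μ S * (if T p ∪ T p' ⊆ S then (1:ℝ) else 0) = q ^ (T p ∪ T p').card := by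
    intro p p'
    have := keyA q (T p ∪ T p')
    rw [← this]
  -- inner second-moment bound
  have key : ∀ p ∈ D, ∑ p' ∈ D, q ^ (T p ∪ T p').card ≤ 8 * r * q ^ 2 := by
    intro p hp
    have hcard : ∀ p' ∈ D, (T p ∪ T p').card = 2 + (T p' \ T p).card := by
      intro p' hp'
      have h1 := card_sdiff_add_card (T p') (T p)
      rw [hTcard p hp] at h1
      rw [union_comm]
      omega
    have hpt : ∀ p' ∈ D, q ^ (T p' \ T p).card ≤
        (if p'.1 ∈ T p ∧ p'.2 ∈ T p then (1:ℝ) else 0)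
        + (if p'.1 ∈ T p ∨ p'.2 ∈ T p then q else 0) + q ^ 2 := by
      intro p' hp'
      have hq2n : (0:ℝ) ≤ q ^ 2 := sq_nonneg q
      by_cases h1 : p'.1 ∈ T p ∧ p'.2 ∈ T p
      · have hle : q ^ (T p' \ T p).card ≤ 1 := pow_le_one₀ hq0 hq1
        rw [if_pos h1, if_pos (Or.inl h1.1)]
        linarith
      by_cases h2 : p'.1 ∈ T p ∨ p'.2 ∈ T p
      · have hne : (T p' \ T p).Nonempty := by
          rcases not_and_or.1 h1 with h | h
          · exact ⟨p'.1, mem_sdiff.2 ⟨mem_insert_self _ _, h⟩⟩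
          · exact ⟨p'.2, mem_sdiff.2 ⟨mem_insert_of_mem (mem_singleton_self _), h⟩⟩
        have hk : 1 ≤ (T p' \ T p).card := card_pos.2 hne
        have hle : q ^ (T p' \ T p).card ≤ q ^ 1 := pow_le_pow_of_le_one hq0 hq1 hk
        rw [pow_one] at hle
        rw [if_neg h1, if_pos h2]
        linarith
      · push_neg at h2
        have hdisj : Disjoint (T p') (T p) := by
          rw [disjoint_left]
          intro x hx
          rcases mem_insert.1 hx with h | h
          · exact h ▸ h2.1
          · exact (mem_singleton.1 h) ▸ h2.2
        have hsd : T p' \ T p = T p' := sdiff_eq_self_iff_disjoint.2 hdisj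
        rw [if_neg h1, if_neg (not_or.2 h2), hsd, hTcard p' hp']
        linarith
    have hS1 : ∑ p' ∈ D, (if p'.1 ∈ T p ∧ p'.2 ∈ T p then (1:ℝ) else 0) ≤ 2 := by
      rw [sum_boole]
      have hsub : D.filter (fun p' => p'.1 ∈ T p ∧ p'.2 ∈ T p)
          ⊆ {(p.1, p.2), (p.2, p.1)} := by
        intro p' hp'
        obtain ⟨hp'D, h1, h2⟩ := mem_filter.1 hp'
        have hne := (hDadj p' hp'D).ne
        simp only [hTdef, mem_insert, mem_singleton] at h1 h2 ⊢
        rcases h1 with h1 | h1 <;> rcases h2 with h2 | h2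
        · exact absurd (h1.trans h2.symm) hne
        · exact Or.inl (Prod.ext_iff.2 ⟨h1, h2⟩)
        · exact Or.inr (Prod.ext_iff.2 ⟨h1, h2⟩)
        · exact absurd (h1.trans h2.symm) hne
      have hcle : (D.filter (fun p' => p'.1 ∈ T p ∧ p'.2 ∈ T p)).card ≤ 2 :=
        le_trans (card_le_card hsub) (le_trans (card_insert_le _ _) (by simp))
      exact_mod_cast Nat.cast_le.2 hcle
    have hS2 : ∑ p' ∈ D, (if p'.1 ∈ T p ∨ p'.2 ∈ T p then q else 0) ≤ 4 * r := by
      have hcN : (D.filter fun p' => p'.1 ∈ T p ∨ p'.2 ∈ T p).card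
          ≤ H.degree p.1 + H.degree p.2 + (H.degree p.1 + H.degree p.2) := by
        rw [filter_or]
        refine le_trans (card_union_le _ _) (Nat.add_le_add ?_ ?_)
        · have e1 : D.filter (fun p' => p'.1 ∈ T p)
              = (D.filter fun p' => p'.1 = p.1) ∪ (D.filter fun p' => p'.1 = p.2) := by
            rw [← filter_or]
            exact filter_congr fun p' _ => by simp [hTdef]
          rw [e1]
          refine le_trans (card_union_le _ _) (Nat.add_le_add ?_ ?_)
          · rw [hDdef, cardFst H p.1]
          · rw [hDdef, cardFst H p.2]
        · have e2 : D.filter (fun p' => p'.2 ∈ T p)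
              = (D.filter fun p' => p'.2 = p.1) ∪ (D.filter fun p' => p'.2 = p.2) := by
            rw [← filter_or]
            exact filter_congr fun p' _ => by simp [hTdef]
          rw [e2]
          refine le_trans (card_union_le _ _) (Nat.add_le_add ?_ ?_)
          · rw [hDdef, cardSnd H p.1]
          · rw [hDdef, cardSnd H p.2]
      have hcR : ((D.filter fun p' => p'.1 ∈ T p ∨ p'.2 ∈ T p).card : ℝ)
          ≤ 4 * Real.sqrt (r * m) := by
        have := hΔ p.1
        have := hΔ p.2
        have hcast : ((D.filter fun p' => p'.1 ∈ T p ∨ p'.2 ∈ T p).card : ℝ)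
            ≤ ((H.degree p.1 : ℝ) + H.degree p.2 + (H.degree p.1 + H.degree p.2)) := by
          exact_mod_cast Nat.cast_le.2 hcN
        linarith
      rw [← sum_filter, sum_const, nsmul_eq_mul]
      calc ((D.filter fun p' => p'.1 ∈ T p ∨ p'.2 ∈ T p).card : ℝ) * q
          ≤ 4 * Real.sqrt (r * m) * q := mul_le_mul_of_nonneg_right hcR hq0
        _ = 4 * r := by rw [mul_assoc, mul_comm (Real.sqrt (r * m)) q, hqrm]
    have hS3 : ∑ _p' ∈ D, q ^ 2 = 2 * r := by
      rw [sum_const, nsmul_eq_mul, hDcard, hq2]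
      field_simp
    calc ∑ p' ∈ D, q ^ (T p ∪ T p').card
        = ∑ p' ∈ D, q ^ 2 * q ^ (T p' \ T p).card :=
          sum_congr rfl fun p' hp' => by rw [hcard p' hp', pow_add]
      _ ≤ ∑ p' ∈ D, q ^ 2 * ((if p'.1 ∈ T p ∧ p'.2 ∈ T p then (1:ℝ) else 0)
            + (if p'.1 ∈ T p ∨ p'.2 ∈ T p then q else 0) + q ^ 2) :=
          sum_le_sum fun p' hp' =>
            mul_le_mul_of_nonneg_left (hpt p' hp') (sq_nonneg q)
      _ = q ^ 2 * ((∑ p' ∈ D, (if p'.1 ∈ T p ∧ p'.2 ∈ T p then (1:ℝ) else 0))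
            + (∑ p' ∈ D, (if p'.1 ∈ T p ∨ p'.2 ∈ T p then q else 0))
            + ∑ _p' ∈ D, q ^ 2) := by
          rw [← mul_sum, sum_add_distrib, sum_add_distrib]
      _ ≤ q ^ 2 * (2 + 4 * r + 2 * r) := by
          refine mul_le_mul_of_nonneg_left ?_ (sq_nonneg q)
          rw [hS3]
          linarith
      _ ≤ 8 * r * q ^ 2 := by nlinarith [sq_nonneg q, hr]
  -- second moment
  have E2 : ∑ S ∈ (univ : Finset V).powerset, μ S * X S ^ 2 ≤ 16 * r ^ 2 := by
    have hXsq : ∀ S : Finset V, μ S * X S ^ 2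
        = ∑ p ∈ D, ∑ p' ∈ D, μ S * (if T p ∪ T p' ⊆ S then (1:ℝ) else 0) := by
      intro S
      have h1 : X S ^ 2 = ∑ p ∈ D, ∑ p' ∈ D,
          (if T p ∪ T p' ⊆ S then (1:ℝ) else 0) := by
        rw [sq]
        simp only [hXdef]
        rw [sum_mul_sum]
        exact sum_congr rfl fun p _ => sum_congr rfl fun p' _ => hpair p p' S
      rw [h1, mul_sum]
      exact sum_congr rfl fun p _ => mul_sum _ _ _
    calc ∑ S ∈ (univ : Finset V).powerset, μ S * X S ^ 2
        = ∑ S ∈ (univ : Finset V).powerset, ∑ p ∈ D, ∑ p' ∈ D,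
            μ S * (if T p ∪ T p' ⊆ S then (1:ℝ) else 0) :=
          sum_congr rfl fun S _ => hXsq S
      _ = ∑ p ∈ D, ∑ p' ∈ D, ∑ S ∈ (univ : Finset V).powerset,
            μ S * (if T p ∪ T p' ⊆ S then (1:ℝ) else 0) := by
          rw [sum_comm]
          exact sum_congr rfl fun p _ => sum_comm
      _ = ∑ p ∈ D, ∑ p' ∈ D, q ^ (T p ∪ T p').card :=
          sum_congr rfl fun p _ => sum_congr rfl fun p' _ => hEpp p p'
      _ ≤ ∑ _p ∈ D, (8 * r * q ^ 2) := sum_le_sum key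
      _ = 16 * r ^ 2 := by
          rw [sum_const, nsmul_eq_mul, hDcard, hq2]
          field_simp
          ring
  -- Cauchy–Schwarz
  set f : Finset V → ℝ := fun S => Real.sqrt (μ S * (if Q S then 1 else 0)) with hfdef
  set g : Finset V → ℝ := fun S => Real.sqrt (μ S) * X S with hgdef
  have hfg : ∀ S, f S * g S = μ S * X S := by
    intro S
    by_cases hQS : Q S
    · simp only [hfdef, hgdef, if_pos hQS, mul_one]
      rw [← mul_assoc, Real.mul_self_sqrt (hμ0 S)]
    · simp [hfdef, hgdef, if_neg hQS, hXQ S hQS]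
  have hf2 : ∀ S, f S ^ 2 = μ S * (if Q S then 1 else 0) := by
    intro S
    refine Real.sq_sqrt (mul_nonneg (hμ0 S) ?_)
    split <;> norm_num
  have hg2 : ∀ S, g S ^ 2 = μ S * X S ^ 2 := by
    intro S
    rw [hgdef]; rw [mul_pow, Real.sq_sqrt (hμ0 S)]
  have hP : prRandom (fun _ => q) Q
      = ∑ S ∈ (univ : Finset V).powerset, μ S * (if Q S then 1 else 0) := by
    refine sum_congr rfl fun S _ => ?_
    by_cases hQS : Q S <;> simp [hQS, hμdef]
  have hP0 : 0 ≤ prRandom (fun _ => q) Q := by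
    rw [hP]
    refine sum_nonneg fun S _ => mul_nonneg (hμ0 S) ?_
    split <;> norm_num
  have CS := sum_mul_sq_le_sq_mul_sq ((univ : Finset V).powerset) f g
  rw [sum_congr rfl fun S _ => hfg S, sum_congr rfl fun S _ => hf2 S,
    sum_congr rfl fun S _ => hg2 S, E1, ← hP] at CS
  have hfin : (2 * r) ^ 2 ≤ prRandom (fun _ => q) Q * (16 * r ^ 2) :=
    le_trans CS (mul_le_mul_of_nonneg_left E2 hP0)
  nlinarith [mul_pos hr0 hr0]
end

section
/- Let n ≥ 4 be a power of two, and let F be a finite bipartite graph with parts V and W, with m ≥ 1 edges and |W| < n. Let q ∈ [0,1]. For each integer i with 1 ≤ i ≤ log₂ n, define p_i = min(1, 12·(log₂ n)·q·2^i) and p′_i = min(1, 4/2^i). Then there exists i with 1 ≤ i ≤ log₂ n such that, when each vertex of V is kept independently with probability p_i and each vertex of W is kept independently with probability p′_i, the probability that some edge of F has both endpoints kept is at least (1 − (1−q)^m)·(1 − e^{−2}). -/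
open Finset

section helpers
variable {X : Type*} [DecidableEq X]

lemma sum_weights (B : Finset X) (c : ℝ) :
    ∑ U ∈ B.powerset, c ^ U.card * (1 - c) ^ (B \ U).card = 1 := by
  have h := Finset.prod_add (fun _ : X => c) (fun _ : X => 1 - c) B
  simp only [Finset.prod_const] at h
  rw [← h]
  simp

lemma hit_prob (B C : Finset X) (hCB : C ⊆ B) (c : ℝ) :
    ∑ U ∈ B.powerset, c ^ U.card * (1 - c) ^ (B \ U).card *
      (if (U ∩ C).Nonempty then 1 else 0) = 1 - (1 - c) ^ C.card := by
  have key : B.powerset.filter (fun U => ¬ (U ∩ C).Nonempty) = (B \ C).powerset := by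
    ext U
    simp only [mem_filter, mem_powerset, Finset.not_nonempty_iff_eq_empty,
      ← Finset.disjoint_iff_inter_eq_empty, Finset.subset_sdiff]
  have hmiss : ∑ U ∈ (B \ C).powerset, c ^ U.card * (1 - c) ^ (B \ U).card
      = (1 - c) ^ C.card := by
    have h2 : ∀ U ∈ (B \ C).powerset, c ^ U.card * (1 - c) ^ (B \ U).card
        = (1 - c) ^ C.card * (c ^ U.card * (1 - c) ^ ((B \ C) \ U).card) := by
      intro U hU
      rw [mem_powerset] at hU
      obtain ⟨hUB, hUC⟩ := Finset.subset_sdiff.mp hU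
      have hBU : B \ U = C ∪ ((B \ C) \ U) := by
        ext v
        simp only [mem_sdiff, mem_union]
        constructor
        · rintro ⟨hvB, hvU⟩
          by_cases hvC : v ∈ C
          · exact Or.inl hvC
          · exact Or.inr ⟨⟨hvB, hvC⟩, hvU⟩
        · rintro (hvC | ⟨⟨hvB, _⟩, hvU⟩)
          · exact ⟨hCB hvC, fun hvU => Finset.disjoint_left.mp hUC hvU hvC⟩
          · exact ⟨hvB, hvU⟩
      have hdis : Disjoint C ((B \ C) \ U) := by
        refine Finset.disjoint_left.mpr ?_
        intro v hvC hv
        exact (Finset.mem_sdiff.mp (Finset.mem_sdiff.mp hv).1).2 hvC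
      rw [hBU, Finset.card_union_of_disjoint hdis, pow_add]
      ring
    rw [Finset.sum_congr rfl h2, ← Finset.mul_sum, sum_weights (B \ C) c, mul_one]
  have hsplit := Finset.sum_filter_add_sum_filter_not B.powerset
    (fun U => (U ∩ C).Nonempty) (fun U => c ^ U.card * (1 - c) ^ (B \ U).card)
  rw [key, hmiss, sum_weights B c] at hsplit
  have : ∑ U ∈ B.powerset, c ^ U.card * (1 - c) ^ (B \ U).card *
      (if (U ∩ C).Nonempty then 1 else 0)
      = ∑ U ∈ B.powerset.filter (fun U => (U ∩ C).Nonempty),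
          c ^ U.card * (1 - c) ^ (B \ U).card := by
    rw [Finset.sum_filter]
    exact Finset.sum_congr rfl (fun U _ => by by_cases h : (U ∩ C).Nonempty <;> simp [h])
  rw [this]
  linarith

lemma powerset_union_sum (A B : Finset X) (hd : Disjoint A B) (f : Finset X → ℝ) :
    ∑ S ∈ (A ∪ B).powerset, f S = ∑ T ∈ A.powerset, ∑ U ∈ B.powerset, f (T ∪ U) := by
  rw [← Finset.sum_product' A.powerset B.powerset (fun T U => f (T ∪ U))]
  refine Finset.sum_nbij' (i := fun S => (S ∩ A, S ∩ B)) (j := fun P => P.1 ∪ P.2)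
    ?_ ?_ ?_ ?_ ?_
  · intro S hS
    simp only [Finset.mem_product, mem_powerset]
    exact ⟨inter_subset_right, inter_subset_right⟩
  · intro P hP
    simp only [Finset.mem_product, mem_powerset] at hP ⊢
    exact Finset.union_subset_union hP.1 hP.2
  · intro S hS
    rw [mem_powerset] at hS
    simp only
    rw [← Finset.inter_union_distrib_left, Finset.inter_eq_left.mpr hS]
  · intro P hP
    simp only [Finset.mem_product, mem_powerset] at hP
    obtain ⟨h1, h2⟩ := hP
    have e1 : (P.1 ∪ P.2) ∩ A = P.1 := by
      rw [Finset.union_inter_distrib_right, Finset.inter_eq_left.mpr h1,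
        Finset.disjoint_iff_inter_eq_empty.mp (Finset.disjoint_of_subset_left h2 hd.symm),
        Finset.union_empty]
    have e2 : (P.1 ∪ P.2) ∩ B = P.2 := by
      rw [Finset.union_inter_distrib_right, Finset.inter_eq_left.mpr h2,
        Finset.disjoint_iff_inter_eq_empty.mp (Finset.disjoint_of_subset_left h1 hd),
        Finset.empty_union]
    simp only [e1, e2]
  · intro S hS
    rw [mem_powerset] at hS
    simp only
    rw [← Finset.inter_union_distrib_left, Finset.inter_eq_left.mpr hS]

end helpers

lemma ite_01_nonneg {P : Prop} [Decidable P] : (0 : ℝ) ≤ if P then 1 else 0 := by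
  split <;> norm_num

lemma degree_sum_bipartite {X : Type*} [Fintype X] [DecidableEq X] (F : SimpleGraph X)
    [DecidableRel F.Adj] (A B : Finset X) (hdisj : Disjoint A B)
    (hbip : ∀ u v, F.Adj u v → (u ∈ A ∧ v ∈ B) ∨ (u ∈ B ∧ v ∈ A)) :
    ∑ a ∈ A, F.degree a = F.edgeFinset.card := by
  classical
  have hdeg : ∀ a : X, F.degree a = (F.edgeFinset.filter (fun e => a ∈ e)).card := by
    intro a
    rw [← SimpleGraph.card_incidenceFinset_eq_degree, SimpleGraph.incidenceFinset_eq_filter]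
  simp_rw [hdeg, Finset.card_filter]
  rw [Finset.sum_comm, Finset.card_eq_sum_ones]
  refine Finset.sum_congr rfl ?_
  intro e he
  have key : ∀ u v : X, F.Adj u v →
      (∑ a ∈ A, if a ∈ (s(u, v) : Sym2 X) then (1 : ℕ) else 0) = 1 := by
    intro u v huv
    rcases hbip u v huv with ⟨hu, hv⟩ | ⟨hu, hv⟩
    · have : ∀ a ∈ A, (if a ∈ (s(u, v) : Sym2 X) then (1 : ℕ) else 0)
          = if a = u then 1 else 0 := by
        intro a ha
        simp only [Sym2.mem_iff]
        by_cases h1 : a = u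
        · simp [h1]
        · have h2 : a ≠ v := by rintro rfl; exact Finset.disjoint_left.mp hdisj ha hv
          simp [h1, h2]
      rw [Finset.sum_congr rfl this, Finset.sum_ite_eq' A u (fun _ => 1)]
      simp [hu]
    · have : ∀ a ∈ A, (if a ∈ (s(u, v) : Sym2 X) then (1 : ℕ) else 0)
          = if a = v then 1 else 0 := by
        intro a ha
        simp only [Sym2.mem_iff]
        by_cases h1 : a = v
        · simp [h1]
        · have h2 : a ≠ u := by rintro rfl; exact Finset.disjoint_left.mp hdisj ha hu
          simp [h1, h2]
      rw [Finset.sum_congr rfl this, Finset.sum_ite_eq' A v (fun _ => 1)]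
      simp [hv]
  induction e with
  | h u v =>
    rw [SimpleGraph.mem_edgeFinset, SimpleGraph.mem_edgeSet] at he
    exact key u v he

/-- Abstract core probability bound. -/
lemma prob_bound {X : Type*} [Fintype X] [DecidableEq X] (F : SimpleGraph X)
    [DecidableRel F.Adj] (A B : Finset X) (hdisj : Disjoint A B)
    (Ai : Finset X) (hAiA : Ai ⊆ A) (k : ℕ)
    (hdeg : ∀ a ∈ Ai, k ≤ (B.filter (fun v => F.Adj a v)).card)
    (p p' : ℝ) (hp0 : 0 ≤ p) (hp1 : p ≤ 1) (hp'0 : 0 ≤ p') (hp'1 : p' ≤ 1)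
    (hexp : (1 - p') ^ k ≤ Real.exp (-2))
    (P : X → ℝ) (hPA : ∀ v ∈ A, P v = p) (hPB : ∀ v ∈ B, P v = p')
    (ind : Finset X → ℝ) (hind0 : ∀ S, 0 ≤ ind S)
    (hind1 : ∀ S u v, F.Adj u v → u ∈ S → v ∈ S → ind S = 1) :
    (1 - (1 - p) ^ Ai.card) * (1 - Real.exp (-2)) ≤
      ∑ S ∈ (A ∪ B).powerset,
        (∏ v ∈ S, P v) * (∏ v ∈ (A ∪ B) \ S, (1 - P v)) * ind S := by
  classical
  rw [powerset_union_sum A B hdisj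
    (fun S => (∏ v ∈ S, P v) * (∏ v ∈ (A ∪ B) \ S, (1 - P v)) * ind S)]
  set CT : Finset X → Finset X := fun T =>
    B.filter (fun v => ∃ a ∈ T ∩ Ai, F.Adj a v) with hCT_def
  have hfact : ∀ T ∈ A.powerset, ∀ U ∈ B.powerset,
      (∏ v ∈ T ∪ U, P v) * (∏ v ∈ (A ∪ B) \ (T ∪ U), (1 - P v)) * ind (T ∪ U)
      = (p ^ T.card * (1 - p) ^ ((A \ T).card)) *
        ((p' ^ U.card * (1 - p') ^ ((B \ U).card)) * ind (T ∪ U)) := by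
    intro T hT U hU
    rw [mem_powerset] at hT hU
    have hTU : Disjoint T U :=
      Finset.disjoint_of_subset_left hT (Finset.disjoint_of_subset_right hU hdisj)
    have e1 : ∏ v ∈ T ∪ U, P v = p ^ T.card * p' ^ U.card := by
      rw [Finset.prod_union hTU,
        Finset.prod_congr rfl (fun v hv => hPA v (hT hv)),
        Finset.prod_congr rfl (fun v hv => hPB v (hU hv)),
        Finset.prod_const, Finset.prod_const]
    have hsd : (A ∪ B) \ (T ∪ U) = (A \ T) ∪ (B \ U) := by
      ext v
      simp only [Finset.mem_sdiff, Finset.mem_union, not_or]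
      constructor
      · rintro ⟨hv | hv, hvT, hvU⟩
        · exact Or.inl ⟨hv, hvT⟩
        · exact Or.inr ⟨hv, hvU⟩
      · rintro (⟨hv, hvT⟩ | ⟨hv, hvU⟩)
        · exact ⟨Or.inl hv, hvT, fun h => Finset.disjoint_left.mp hdisj hv (hU h)⟩
        · exact ⟨Or.inr hv, fun h => Finset.disjoint_left.mp hdisj (hT h) hv, hvU⟩
    have hsdisj : Disjoint (A \ T) (B \ U) :=
      Finset.disjoint_of_subset_left sdiff_subset
        (Finset.disjoint_of_subset_right sdiff_subset hdisj)
    have hA1 : ∀ v ∈ A \ T, (1 : ℝ) - P v = 1 - p := fun v hv => by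
      rw [hPA v (Finset.mem_sdiff.mp hv).1]
    have hB1 : ∀ v ∈ B \ U, (1 : ℝ) - P v = 1 - p' := fun v hv => by
      rw [hPB v (Finset.mem_sdiff.mp hv).1]
    have e2 : ∏ v ∈ (A ∪ B) \ (T ∪ U), (1 - P v)
        = (1 - p) ^ ((A \ T).card) * (1 - p') ^ ((B \ U).card) := by
      rw [hsd, Finset.prod_union hsdisj, Finset.prod_congr rfl hA1,
        Finset.prod_congr rfl hB1, Finset.prod_const, Finset.prod_const]
    rw [e1, e2]
    ring
  have hinner : ∀ T ∈ A.powerset,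
      (1 - Real.exp (-2)) * (if (T ∩ Ai).Nonempty then (1:ℝ) else 0) ≤
      ∑ U ∈ B.powerset, (p' ^ U.card * (1 - p') ^ ((B \ U).card)) * ind (T ∪ U) := by
    intro T hT
    rw [mem_powerset] at hT
    have hmono : ∑ U ∈ B.powerset, p' ^ U.card * (1 - p') ^ ((B \ U).card) *
        (if (U ∩ CT T).Nonempty then (1:ℝ) else 0) ≤
        ∑ U ∈ B.powerset, (p' ^ U.card * (1 - p') ^ ((B \ U).card)) * ind (T ∪ U) := by
      apply Finset.sum_le_sum
      intro U hU
      have hw : (0:ℝ) ≤ p' ^ U.card * (1 - p') ^ ((B \ U).card) :=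
        mul_nonneg (pow_nonneg hp'0 _) (pow_nonneg (by linarith) _)
      apply mul_le_mul_of_nonneg_left _ hw
      by_cases hNE : (U ∩ CT T).Nonempty
      · rw [if_pos hNE]
        obtain ⟨v, hv⟩ := hNE
        rw [Finset.mem_inter] at hv
        obtain ⟨hvU, hvCT⟩ := hv
        rw [hCT_def] at hvCT
        simp only [Finset.mem_filter] at hvCT
        obtain ⟨hvB, a, haT, hadj⟩ := hvCT
        rw [Finset.mem_inter] at haT
        exact le_of_eq (hind1 (T ∪ U) a v hadj (Finset.mem_union_left _ haT.1)
          (Finset.mem_union_right _ hvU)).symm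
      · rw [if_neg hNE]
        exact hind0 _
    refine le_trans ?_ hmono
    rw [hit_prob B (CT T) (Finset.filter_subset _ _) p']
    by_cases hNE : (T ∩ Ai).Nonempty
    · rw [if_pos hNE, mul_one]
      obtain ⟨a, ha⟩ := hNE
      rw [Finset.mem_inter] at ha
      have hsub : B.filter (fun v => F.Adj a v) ⊆ CT T := by
        intro v hv
        rw [Finset.mem_filter] at hv
        rw [hCT_def]
        exact Finset.mem_filter.mpr ⟨hv.1, a, Finset.mem_inter.mpr ha, hv.2⟩
      have hcard : k ≤ (CT T).card :=
        le_trans (hdeg a ha.2) (Finset.card_le_card hsub)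
      have hmono2 : (1 - p') ^ ((CT T).card) ≤ (1 - p') ^ k :=
        pow_le_pow_of_le_one (by linarith) (by linarith) hcard
      linarith [hexp]
    · rw [if_neg hNE, mul_zero]
      have : (1 - p') ^ ((CT T).card) ≤ 1 := pow_le_one₀ (by linarith) (by linarith)
      linarith
  have step : ∀ T ∈ A.powerset,
      (p ^ T.card * (1 - p) ^ ((A \ T).card)) *
        ((1 - Real.exp (-2)) * (if (T ∩ Ai).Nonempty then (1:ℝ) else 0)) ≤
      ∑ U ∈ B.powerset,
        (∏ v ∈ T ∪ U, P v) * (∏ v ∈ (A ∪ B) \ (T ∪ U), (1 - P v)) * ind (T ∪ U) := by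
    intro T hT
    rw [Finset.sum_congr rfl (fun U hU => hfact T hT U hU), ← Finset.mul_sum]
    exact mul_le_mul_of_nonneg_left (hinner T hT)
      (mul_nonneg (pow_nonneg hp0 _) (pow_nonneg (by linarith) _))
  calc (1 - (1 - p) ^ Ai.card) * (1 - Real.exp (-2))
      = ∑ T ∈ A.powerset, (p ^ T.card * (1 - p) ^ ((A \ T).card)) *
          ((1 - Real.exp (-2)) * (if (T ∩ Ai).Nonempty then (1:ℝ) else 0)) := by
        rw [← hit_prob A Ai hAiA p, Finset.sum_mul]
        exact Finset.sum_congr rfl (fun T _ => by ring)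
    _ ≤ _ := Finset.sum_le_sum step

/-- Bipartite refinement: for a bipartite graph `F` with parts `A` (= V) and `B` (= W),
`m ≥ 1` edges, `|B| < n = 2^L` with `n ≥ 4`, and `q ∈ [0,1]`, there exists
`1 ≤ i ≤ L` such that keeping each vertex of `A` with probability
`min(1, 12·(log₂ n)·q·2^i)` and each vertex of `B` with probability `min(1, 4/2^i)`,
some edge survives with probability at least `(1 - (1-q)^m)(1 - e⁻²)`. -/
theorem stmt14 {X : Type*} [Fintype X] [DecidableEq X] (F : SimpleGraph X)
    [DecidableRel F.Adj]
    (A B : Finset X) (hdisj : Disjoint A B) (hcover : A ∪ B = Finset.univ)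
    (hbip : ∀ u v, F.Adj u v → (u ∈ A ∧ v ∈ B) ∨ (u ∈ B ∧ v ∈ A))
    (m : ℕ) (hm : m = F.edgeFinset.card) (hm1 : 1 ≤ m)
    (L n : ℕ) (hn : n = 2 ^ L) (hn4 : 4 ≤ n) (hB : B.card < n)
    (q : ℝ) (hq : q ∈ Set.Icc (0 : ℝ) 1) :
    ∃ i : ℕ, 1 ≤ i ∧ i ≤ L ∧
      (1 - (1 - q) ^ m) * (1 - Real.exp (-2)) ≤
        prRandom
          (fun v => if v ∈ A then min 1 (12 * (L : ℝ) * q * 2 ^ i)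
            else min 1 (4 / 2 ^ i))
          (fun S => ∃ u v, F.Adj u v ∧ u ∈ S ∧ v ∈ S) := by
  classical
  obtain ⟨hq0, hq1⟩ := hq
  subst hn
  have hL2 : 2 ≤ L := by
    by_contra h
    push_neg at h
    interval_cases L <;> omega
  have hnbrs : ∀ a ∈ A, F.neighborFinset a ⊆ B := by
    intro a ha v hv
    rw [SimpleGraph.mem_neighborFinset] at hv
    rcases hbip a v hv with ⟨_, h⟩ | ⟨h, _⟩
    · exact h
    · exact (Finset.disjoint_left.mp hdisj ha h).elim
  have hdegsum : ∑ a ∈ A, F.degree a = m := by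
    rw [hm]; exact degree_sum_bipartite F A B hdisj hbip
  have hdegB : ∀ a ∈ A, F.degree a ≤ B.card := fun a ha =>
    Finset.card_le_card (hnbrs a ha)
  set Ai : ℕ → Finset X := fun i =>
    (A.filter (fun a => 0 < F.degree a)).filter
      (fun a => Nat.log 2 (F.degree a) + 1 = i) with hAi
  have hmaps : ∀ a ∈ A.filter (fun a => 0 < F.degree a),
      Nat.log 2 (F.degree a) + 1 ∈ Finset.Icc 1 L := by
    intro a ha
    rw [Finset.mem_filter] at ha
    obtain ⟨haA, hd0⟩ := ha
    rw [Finset.mem_Icc]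
    refine ⟨by omega, ?_⟩
    have h1 : 2 ^ Nat.log 2 (F.degree a) ≤ F.degree a :=
      Nat.pow_log_le_self 2 hd0.ne'
    have h2 : F.degree a < 2 ^ L := lt_of_le_of_lt (hdegB a haA) hB
    have h3 : 2 ^ Nat.log 2 (F.degree a) < 2 ^ L := lt_of_le_of_lt h1 h2
    have : Nat.log 2 (F.degree a) < L :=
      (Nat.pow_lt_pow_iff_right (by norm_num)).mp h3
    omega
  have hfib : ∑ i ∈ Finset.Icc 1 L, ∑ a ∈ Ai i, F.degree a = m := by
    have h := Finset.sum_fiberwise_of_maps_to hmaps (fun a => F.degree a)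
    calc ∑ i ∈ Finset.Icc 1 L, ∑ a ∈ Ai i, F.degree a
        = ∑ j ∈ Finset.Icc 1 L, ∑ a ∈ (A.filter (fun a => 0 < F.degree a)).filter
            (fun a => Nat.log 2 (F.degree a) + 1 = j), F.degree a := rfl
      _ = ∑ a ∈ A.filter (fun a => 0 < F.degree a), F.degree a := h
      _ = m := by
          rw [Finset.sum_filter_of_ne (fun a ha hne => ?_)]
          · exact hdegsum
          · exact Nat.pos_of_ne_zero hne
  have hub : ∀ i, ∑ a ∈ Ai i, F.degree a ≤ (Ai i).card * 2 ^ i := by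
    intro i
    have hb : ∀ a ∈ Ai i, F.degree a ≤ 2 ^ i := by
      intro a ha
      rw [hAi, Finset.mem_filter] at ha
      obtain ⟨_, hlog⟩ := ha
      calc F.degree a ≤ 2 ^ (Nat.log 2 (F.degree a) + 1) :=
            (Nat.lt_pow_succ_log_self (by norm_num) _).le
        _ = 2 ^ i := by rw [hlog]
    calc ∑ a ∈ Ai i, F.degree a ≤ ∑ _a ∈ Ai i, 2 ^ i := Finset.sum_le_sum hb
      _ = (Ai i).card * 2 ^ i := by rw [Finset.sum_const, smul_eq_mul]
  have hpick : ∃ i ∈ Finset.Icc 1 L, m ≤ L * ((Ai i).card * 2 ^ i) := by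
    by_contra h
    push_neg at h
    have hsum : m ≤ ∑ i ∈ Finset.Icc 1 L, (Ai i).card * 2 ^ i := by
      rw [← hfib]
      exact Finset.sum_le_sum (fun i _ => hub i)
    have h1 : L * m ≤ ∑ i ∈ Finset.Icc 1 L, L * ((Ai i).card * 2 ^ i) := by
      rw [← Finset.mul_sum]
      exact Nat.mul_le_mul_left L hsum
    have h2 : ∑ i ∈ Finset.Icc 1 L, L * ((Ai i).card * 2 ^ i) ≤ L * (m - 1) := by
      calc ∑ i ∈ Finset.Icc 1 L, L * ((Ai i).card * 2 ^ i)
          ≤ ∑ _i ∈ Finset.Icc 1 L, (m - 1) :=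
            Finset.sum_le_sum (fun i hi => by have := h i hi; omega)
        _ = L * (m - 1) := by
            rw [Finset.sum_const, smul_eq_mul, Nat.card_Icc, Nat.add_sub_cancel]
    have : m ≤ m - 1 := Nat.le_of_mul_le_mul_left (le_trans h1 h2) (by omega)
    omega
  obtain ⟨i, hiIcc, hpigeon⟩ := hpick
  rw [Finset.mem_Icc] at hiIcc
  obtain ⟨hi1, hiL⟩ := hiIcc
  refine ⟨i, hi1, hiL, ?_⟩
  set p : ℝ := min 1 (12 * (L : ℝ) * q * 2 ^ i) with hp_def
  set p' : ℝ := min 1 (4 / 2 ^ i) with hp'_def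
  have hp0 : 0 ≤ p := le_min (by norm_num) (by positivity)
  have hp1 : p ≤ 1 := min_le_left _ _
  have hp'0 : 0 ≤ p' := le_min (by norm_num) (by positivity)
  have hp'1 : p' ≤ 1 := min_le_left _ _
  have hqp : (1 - p) ^ ((Ai i).card) ≤ (1 - q) ^ m := by
    have hc : (1 : ℝ) - p ≤ (1 - q) ^ (L * 2 ^ i) := by
      have hbern : 1 - ((L * 2 ^ i : ℕ) : ℝ) * q ≤ (1 - q) ^ (L * 2 ^ i) := by
        have h := one_add_mul_le_pow (a := -q) (by linarith) (L * 2 ^ i)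
        have e1 : (1 : ℝ) + (-q) = 1 - q := by ring
        have e2 : (1 : ℝ) + ((L * 2 ^ i : ℕ) : ℝ) * (-q)
            = 1 - ((L * 2 ^ i : ℕ) : ℝ) * q := by ring
        rw [e1, e2] at h
        exact h
      have hcast : ((L * 2 ^ i : ℕ) : ℝ) * q ≤ 12 * (L : ℝ) * q * 2 ^ i := by
        push_cast
        have hL0 : (0 : ℝ) ≤ (L : ℝ) := Nat.cast_nonneg L
        have h2i : (0 : ℝ) ≤ (2 : ℝ) ^ i := by positivity
        nlinarith [mul_nonneg (mul_nonneg hL0 h2i) hq0]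
      have h1 : 1 - (1 - q) ^ (L * 2 ^ i) ≤ 1 := by
        have : (0 : ℝ) ≤ (1 - q) ^ (L * 2 ^ i) := pow_nonneg (by linarith) _
        linarith
      have h2 : 1 - (1 - q) ^ (L * 2 ^ i) ≤ 12 * (L : ℝ) * q * 2 ^ i := by linarith
      have h3 := le_min h1 h2
      rw [← hp_def] at h3
      linarith
    calc (1 - p) ^ ((Ai i).card) ≤ ((1 - q) ^ (L * 2 ^ i)) ^ ((Ai i).card) :=
          pow_le_pow_left₀ (by linarith) hc _
      _ = (1 - q) ^ (L * 2 ^ i * (Ai i).card) := by rw [← pow_mul]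
      _ ≤ (1 - q) ^ m := by
          apply pow_le_pow_of_le_one (by linarith) (by linarith)
          calc m ≤ L * ((Ai i).card * 2 ^ i) := hpigeon
            _ = L * 2 ^ i * (Ai i).card := by ring
  have hexp : (1 - p') ^ (2 ^ (i - 1)) ≤ Real.exp (-2) := by
    by_cases hcse : (4 : ℝ) / 2 ^ i ≤ 1
    · have hp'eq : p' = 4 / 2 ^ i := min_eq_right hcse
      have step1 : (1 - p') ^ (2 ^ (i - 1)) ≤ (Real.exp (-p')) ^ (2 ^ (i - 1)) :=
        pow_le_pow_left₀ (by linarith) (Real.one_sub_le_exp_neg p') _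
      have step2 : (Real.exp (-p')) ^ (2 ^ (i - 1))
          = Real.exp (((2 ^ (i - 1) : ℕ) : ℝ) * (-p')) := (Real.exp_nat_mul _ _).symm
      have h2i : (2 : ℝ) ^ i = 2 ^ (i - 1) * 2 := by
        rw [← pow_succ, Nat.sub_add_cancel hi1]
      have step3 : ((2 ^ (i - 1) : ℕ) : ℝ) * (-p') = -2 := by
        rw [hp'eq, h2i]
        push_cast
        have hne : (2 : ℝ) ^ (i - 1) ≠ 0 := by positivity
        field_simp
        ring
      rw [step2, step3] at step1
      exact step1
    · have hp'eq : p' = 1 := min_eq_left (le_of_not_ge hcse)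
      rw [hp'eq]
      have hz : ((1 : ℝ) - 1) ^ (2 ^ (i - 1)) = 0 := by
        rw [sub_self, zero_pow]
        positivity
      rw [hz]
      exact (Real.exp_pos _).le
  have hdeg' : ∀ a ∈ Ai i, 2 ^ (i - 1) ≤ (B.filter (fun v => F.Adj a v)).card := by
    intro a ha
    have haAi := ha
    rw [hAi, Finset.mem_filter, Finset.mem_filter] at haAi
    obtain ⟨⟨haA, hd0⟩, hlog⟩ := haAi
    have hsub : F.neighborFinset a ⊆ B.filter (fun v => F.Adj a v) := by
      intro v hv
      rw [SimpleGraph.mem_neighborFinset] at hv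
      exact Finset.mem_filter.mpr ⟨hnbrs a haA (by rwa [SimpleGraph.mem_neighborFinset]), hv⟩
    have hk : 2 ^ (i - 1) ≤ F.degree a := by
      have h1 : 2 ^ (i - 1) ≤ 2 ^ (Nat.log 2 (F.degree a)) :=
        Nat.pow_le_pow_right (by norm_num) (by omega)
      exact le_trans h1 (Nat.pow_log_le_self 2 hd0.ne')
    calc 2 ^ (i - 1) ≤ F.degree a := hk
      _ = (F.neighborFinset a).card := rfl
      _ ≤ (B.filter (fun v => F.Adj a v)).card := Finset.card_le_card hsub
  have hAiA : Ai i ⊆ A := (Finset.filter_subset _ _).trans (Finset.filter_subset _ _)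
  have happ := prob_bound F A B hdisj (Ai i) hAiA (2 ^ (i - 1)) hdeg'
    p p' hp0 hp1 hp'0 hp'1 hexp
    (fun v => if v ∈ A then p else p')
    (fun v hv => if_pos hv)
    (fun v hv => if_neg (Finset.disjoint_right.mp hdisj hv))
    (fun S => @ite ℝ (∃ u v, F.Adj u v ∧ u ∈ S ∧ v ∈ S) (Classical.propDecidable _) 1 0)
    (fun S => @ite_01_nonneg _ (Classical.propDecidable _))
    (fun S u v hadj hu hv =>
      @if_pos _ (Classical.propDecidable _) ⟨u, v, hadj, hu, hv⟩ ℝ 1 0)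
  unfold prRandom
  rw [← hcover]
  refine le_trans ?_ happ
  have hexp1 : Real.exp (-2) ≤ 1 := by
    rw [← Real.exp_zero]
    exact Real.exp_le_exp.mpr (by norm_num)
  have hmono : 1 - (1 - q) ^ m ≤ 1 - (1 - p) ^ ((Ai i).card) := by linarith [hqp]
  exact mul_le_mul_of_nonneg_right hmono (by linarith)
end

section
/- Let G be a finite tripartite simple graph with vertex parts A, B, C (each part is an independent set), and let p ≥ 2 be an integer. Define the graph G′ on vertex set A ⊔ (B × {1,…,p}) ⊔ C, where: a ∈ A and (b,i) are adjacent in G′ iff a and b are adjacent in G; (b,i) and c ∈ C are adjacent in G′ iff b and c are adjacent in G; a ∈ A and c ∈ C are adjacent in G′ iff they are adjacent in G; and no two vertices of B × {1,…,p} are adjacent. Then: (i) G′ is tripartite with parts A, B × {1,…,p}, C, and in particular contains no clique on 4 vertices; (ii) if G contains no triangle, then G′ contains no induced diamond; (iii) if G contains a triangle (a,b,c) with a ∈ A, b ∈ B, c ∈ C, then for every pair of distinct indices i, j the set {a,(b,i),c,(b,j)} is an induced diamond of G′ (the only non-adjacent pair being {(b,i),(b,j)}), so G′ contains at least p(p−1)/2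 induced diamonds. -/
variable {V : Type*}

/-- The part (side) of a vertex of the blown-up graph: `0` for `A`, `1` for
`B × Fin p`, `2` for `C`. -/
def bside (A B C : Finset V) (p : ℕ) : (↥A ⊕ (↥B × Fin p ⊕ ↥C)) → Fin 3
  | Sum.inl _ => 0
  | Sum.inr (Sum.inl _) => 1
  | Sum.inr (Sum.inr _) => 2

/-- The projection of a vertex of the blown-up graph to the original vertex set. -/
def bproj (A B C : Finset V) (p : ℕ) : (↥A ⊕ (↥B × Fin p ⊕ ↥C)) → V
  | Sum.inl a => a.1
  | Sum.inr (Sum.inl bi) => bi.1.1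
  | Sum.inr (Sum.inr c) => c.1

/-- The graph `G′` on `A ⊔ (B × {1,…,p}) ⊔ C`: vertices in distinct parts are adjacent
iff their projections are adjacent in `G`; vertices in the same part are never
adjacent (in particular no two copies `(b,i)`, `(b,j)` are adjacent). -/
def blowup (G : SimpleGraph V) (A B C : Finset V) (p : ℕ) :
    SimpleGraph (↥A ⊕ (↥B × Fin p ⊕ ↥C)) where
  Adj x y := bside A B C p x ≠ bside A B C p y ∧ G.Adj (bproj A B C p x) (bproj A B C p y)
  symm := ⟨fun x y h => ⟨h.1.symm, h.2.symm⟩⟩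
  loopless := ⟨fun x h => h.1 rfl⟩

/-!
The parts give a proper 3-colouring of `G′`, so `G′` has no `K₄`, and the projection `G′ → G`
is a graph homomorphism. Any three vertices of an induced diamond that include both endpoints
of its central edge form a triangle, which the projection carries to a triangle of `G`.
Conversely, a triangle `a, b, c` of `G` gives the induced diamond `{a, c, (b,i), (b,j)}` for each
pair `{i, j}`, and the pair is recovered from the diamond as its two vertices other than
`a` and `c`, so there are at least `p(p-1)/2` of them.
-/

section Diamond

variable {W : Type*} {G : SimpleGraph W} {a b c d : W}

theorem IsDiamond.adj_triangle (h : IsDiamond G a b c d) :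
    G.Adj a b ∧ G.Adj a c ∧ G.Adj b c :=
  ⟨h.2.2.2.2.2.2.1, h.2.2.2.2.2.2.2.1, h.2.2.2.2.2.2.2.2.2.1⟩

theorem IsDiamond.card_eq_four [DecidableEq W] (h : IsDiamond G a b c d) :
    ({a, b, c, d} : Finset W).card = 4 :=
  Finset.card_eq_four.2 ⟨a, b, c, d, h.1, h.2.1, h.2.2.1, h.2.2.2.1, h.2.2.2.2.1,
    h.2.2.2.2.2.1, rfl⟩

theorem SimpleGraph.Hom.not_exists_isDiamond {W' : Type*} {G' : SimpleGraph W'} (f : G →g G')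
    (hG' : ¬ ∃ x y z, G'.Adj x y ∧ G'.Adj x z ∧ G'.Adj y z) :
    ¬ ∃ a b c d, IsDiamond G a b c d := by
  rintro ⟨a, b, c, d, h⟩
  obtain ⟨hab, hac, hbc⟩ := h.adj_triangle
  exact hG' ⟨f a, f b, f c, f.map_adj hab, f.map_adj hac, f.map_adj hbc⟩

theorem choose_two_le_card_filter_of_isDiamond [Fintype W] [DecidableEq W] {ι : Type*}
    [Fintype ι] {x y : W} {e : ι → W} (he : ∀ i j, i ≠ j → IsDiamond G x y (e i) (e j))
    {P : Finset W → Prop} [DecidablePred P]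
    (hP : ∀ a b c d, IsDiamond G a b c d → P {a, b, c, d}) :
    (Fintype.card ι).choose 2 ≤ ((Finset.univ.powersetCard 4).filter P).card := by
  classical
  have he_inj : Function.Injective e := fun i j hij =>
    by_contra fun hne => (he i j hne).2.2.2.2.2.1 hij
  let f : Finset ι → Finset W := fun s => insert x (insert y (s.image e))
  have hmaps : ∀ s ∈ Finset.univ.powersetCard 2, f s ∈ (Finset.univ.powersetCard 4).filter P := by
    intro s hs
    obtain ⟨i, j, hij, rfl⟩ := Finset.card_eq_two.1 (Finset.mem_powersetCard.1 hs).2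
    have hf : f {i, j} = {x, y, e i, e j} := by simp [f]
    rw [hf, Finset.mem_filter, Finset.mem_powersetCard]
    exact ⟨⟨Finset.subset_univ _, (he i j hij).card_eq_four⟩, hP _ _ _ _ (he i j hij)⟩
  have hsubset : ∀ s ∈ Finset.univ.powersetCard 2, ∀ t, f s = f t → s ⊆ t := by
    intro s hs t hst k hk
    obtain ⟨l, -, hlk⟩ :=
      Finset.exists_mem_ne ((Finset.mem_powersetCard.1 hs).2 ▸ one_lt_two) k
    have hxk : e k ≠ x := (he k l hlk.symm).2.1.symm
    have hyk : e k ≠ y := (he k l hlk.symm).2.2.2.1.symm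
    have hkt : e k ∈ f t :=
      hst ▸ Finset.mem_insert_of_mem (Finset.mem_insert_of_mem (Finset.mem_image_of_mem e hk))
    simpa [f, hxk, hyk, he_inj.mem_finset_image] using hkt
  calc (Fintype.card ι).choose 2 = (Finset.univ.powersetCard 2 : Finset (Finset ι)).card := by
        rw [Finset.card_powersetCard, Finset.card_univ]
    _ ≤ _ := Finset.card_le_card_of_injOn f hmaps fun s hs t ht hst =>
        (hsubset s hs t hst).antisymm (hsubset t ht s hst.symm)

end Diamond

theorem SimpleGraph.Coloring.not_exists_four_clique {W : Type*} {G : SimpleGraph W}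
    (f : G.Coloring (Fin 3)) :
    ¬ ∃ w x y z, G.Adj w x ∧ G.Adj w y ∧ G.Adj w z ∧ G.Adj x y ∧ G.Adj x z ∧ G.Adj y z := by
  have no_four_distinct : ∀ a b c d : Fin 3,
      ¬ (a ≠ b ∧ a ≠ c ∧ a ≠ d ∧ b ≠ c ∧ b ≠ d ∧ c ≠ d) := by decide
  rintro ⟨w, x, y, z, hwx, hwy, hwz, hxy, hxz, hyz⟩
  exact no_four_distinct _ _ _ _ ⟨f.valid hwx, f.valid hwy, f.valid hwz, f.valid hxy,
    f.valid hxz, f.valid hyz⟩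

section Blowup

variable (G : SimpleGraph V) (A B C : Finset V) (p : ℕ)

def blowupColoring : (blowup G A B C p).Coloring (Fin 3) :=
  SimpleGraph.Coloring.mk (bside A B C p) fun h => h.1

def blowupProj : blowup G A B C p →g G :=
  ⟨bproj A B C p, fun h => h.2⟩

variable {G A B C p}

theorem isDiamond_blowup_of_adj {a : A} {b : B} {c : C}
    (hab : G.Adj a b) (hbc : G.Adj b c) (hac : G.Adj a c) {i j : Fin p} (hij : i ≠ j) :
    IsDiamond (blowup G A B C p) (Sum.inl a) (Sum.inr (Sum.inr c))
      (Sum.inr (Sum.inl (b, i))) (Sum.inr (Sum.inl (b, j))) := by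
  simp [IsDiamond, blowup, bside, bproj, hab, hbc.symm, hac, hij]

end Blowup

open Classical in
theorem stmt15_general [DecidableEq V] (G : SimpleGraph V)
    (A B C : Finset V) (p : ℕ) :
    -- (i) G′ is tripartite (every edge joins distinct parts), hence has no 4-clique
    ((∀ x y, (blowup G A B C p).Adj x y → bside A B C p x ≠ bside A B C p y) ∧
      ¬ ∃ w x y z : ↥A ⊕ (↥B × Fin p ⊕ ↥C),
          (blowup G A B C p).Adj w x ∧ (blowup G A B C p).Adj w y ∧
          (blowup G A B C p).Adj w z ∧ (blowup G A B C p).Adj x y ∧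
          (blowup G A B C p).Adj x z ∧ (blowup G A B C p).Adj y z) ∧
    -- (ii) if G is triangle-free then G′ has no induced diamond
    ((¬ ∃ x y z : V, G.Adj x y ∧ G.Adj x z ∧ G.Adj y z) →
      ¬ ∃ a b c d, IsDiamond (blowup G A B C p) a b c d) ∧
    -- (iii) a triangle of G with a ∈ A, b ∈ B, c ∈ C gives, for all i ≠ j, the induced
    -- diamond {a, (b,i), c, (b,j)} (missing pair the two copies of b), so G′ has at
    -- least p(p-1)/2 induced diamonds
    (∀ (a : ↥A) (b : ↥B) (c : ↥C),
      G.Adj a.1 b.1 → G.Adj b.1 c.1 → G.Adj a.1 c.1 →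
      (∀ i j : Fin p, i ≠ j →
        IsDiamond (blowup G A B C p) (Sum.inl a) (Sum.inr (Sum.inr c))
          (Sum.inr (Sum.inl (b, i))) (Sum.inr (Sum.inl (b, j)))) ∧
      p * (p - 1) / 2 ≤
        ((Finset.univ.powersetCard 4).filter
          (fun s : Finset (↥A ⊕ (↥B × Fin p ⊕ ↥C)) =>
            ∃ a' b' c' d', s = {a', b', c', d'} ∧
              IsDiamond (blowup G A B C p) a' b' c' d')).card) := by
  refine ⟨⟨fun _ _ h => (blowupColoring G A B C p).valid h,
    (blowupColoring G A B C p).not_exists_four_clique⟩,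
    (blowupProj G A B C p).not_exists_isDiamond, fun a b c hab hbc hac => ?_⟩
  have hdiamond : ∀ i j : Fin p, i ≠ j → _ := fun _ _ =>
    isDiamond_blowup_of_adj (b := b) hab hbc hac
  refine ⟨hdiamond, ?_⟩
  calc p * (p - 1) / 2 = (Fintype.card (Fin p)).choose 2 := by
        rw [Fintype.card_fin, Nat.choose_two_right]
    _ ≤ _ := choose_two_le_card_filter_of_isDiamond hdiamond
        fun a b c d h => ⟨a, b, c, d, rfl, h⟩

open Classical in
theorem stmt15 [Fintype V] [DecidableEq V] (G : SimpleGraph V)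
    (A B C : Finset V) (p : ℕ) (hp : 2 ≤ p)
    (hcover : A ∪ B ∪ C = Finset.univ)
    (hAB : Disjoint A B) (hAC : Disjoint A C) (hBC : Disjoint B C)
    (hA : ∀ u ∈ A, ∀ v ∈ A, ¬ G.Adj u v)
    (hB : ∀ u ∈ B, ∀ v ∈ B, ¬ G.Adj u v)
    (hC : ∀ u ∈ C, ∀ v ∈ C, ¬ G.Adj u v) :
    -- (i) G′ is tripartite (every edge joins distinct parts), hence has no 4-clique
    ((∀ x y, (blowup G A B C p).Adj x y → bside A B C p x ≠ bside A B C p y) ∧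
      ¬ ∃ w x y z : ↥A ⊕ (↥B × Fin p ⊕ ↥C),
          (blowup G A B C p).Adj w x ∧ (blowup G A B C p).Adj w y ∧
          (blowup G A B C p).Adj w z ∧ (blowup G A B C p).Adj x y ∧
          (blowup G A B C p).Adj x z ∧ (blowup G A B C p).Adj y z) ∧
    -- (ii) if G is triangle-free then G′ has no induced diamond
    ((¬ ∃ x y z : V, G.Adj x y ∧ G.Adj x z ∧ G.Adj y z) →
      ¬ ∃ a b c d, IsDiamond (blowup G A B C p) a b c d) ∧
    -- (iii) a triangle of G with a ∈ A, b ∈ B, c ∈ C gives, for all i ≠ j, the induced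
    -- diamond {a, (b,i), c, (b,j)} (missing pair the two copies of b), so G′ has at
    -- least p(p-1)/2 induced diamonds
    (∀ (a : ↥A) (b : ↥B) (c : ↥C),
      G.Adj a.1 b.1 → G.Adj b.1 c.1 → G.Adj a.1 c.1 →
      (∀ i j : Fin p, i ≠ j →
        IsDiamond (blowup G A B C p) (Sum.inl a) (Sum.inr (Sum.inr c))
          (Sum.inr (Sum.inl (b, i))) (Sum.inr (Sum.inl (b, j)))) ∧
      p * (p - 1) / 2 ≤
        ((Finset.univ.powersetCard 4).filter
          (fun s : Finset (↥A ⊕ (↥B × Fin p ⊕ ↥C)) =>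
            ∃ a' b' c' d', s = {a', b', c', d'} ∧
              IsDiamond (blowup G A B C p) a' b' c' d')).card) :=
  stmt15_general G A B C p
end

section
/- Let F be a finite bipartite graph with parts A and B and t ≥ 4 edges, and let r ≥ 1 be a real number. Then at least one of the following holds: (1) there exists a subset S ⊆ A such that every vertex of S has degree at least √(r·t)/2 in F and the number of edges of F incident to S is at least t/(36·(log₂ t)²); (2) there exists a subset S ⊆ B with the same two properties; (3) F has a subgraph with at least t/(36·(log₂ t)²) edges whose maximum degree is at most √(r·t). -/
/-!
Call a vertex heavy if its degree is at least `√(rt)/2`. If the heavy vertices of `A`, or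
those of `B`, meet at least `b = t/(36 (log₂ t)²)` edges, we are done. Otherwise fewer than
`2b` edges meet a heavy vertex, and deleting them leaves a subgraph of maximum degree below
`√(rt)/2` with more than `t - 2b ≥ b` edges, since `36 (log₂ t)² ≥ 3` for `t ≥ 2`.
-/

open Finset

namespace SimpleGraph

variable {V : Type*} [Fintype V] [DecidableEq V] (G : SimpleGraph V) [DecidableRel G.Adj]

theorem ncard_edgeSet_deleteEdges_add_card_filter (H : Finset V) :
    (G.deleteEdges {e | ∃ v ∈ H, v ∈ e}).edgeSet.ncard +
      #(G.edgeFinset.filter fun e => ∃ v ∈ H, v ∈ e) = #G.edgeFinset := by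
  have hcoe : (G.deleteEdges {e | ∃ v ∈ H, v ∈ e}).edgeSet =
      ↑(G.edgeFinset.filter fun e => ¬∃ v ∈ H, v ∈ e) := by
    ext e
    simp [edgeSet_deleteEdges]
  rw [hcoe, Set.ncard_coe_finset, add_comm]
  exact card_filter_add_card_filter_not _

theorem ncard_neighborSet_deleteEdges_le (H : Finset V) {d : ℝ} (hd : 0 ≤ d)
    (hH : ∀ v ∉ H, (G.degree v : ℝ) ≤ d) (v : V) :
    (((G.deleteEdges {e | ∃ v ∈ H, v ∈ e}).neighborSet v).ncard : ℝ) ≤ d := by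
  by_cases hv : v ∈ H
  · have hempty : (G.deleteEdges {e | ∃ v ∈ H, v ∈ e}).neighborSet v = ∅ := by
      ext w
      simp only [mem_neighborSet, deleteEdges_adj, Set.mem_ofPred_eq, Set.mem_empty_iff_false,
        iff_false, not_and, not_not]
      exact fun _ => ⟨v, hv, Sym2.mem_mk_left v w⟩
    simpa [hempty] using hd
  · have hle : ((G.deleteEdges {e | ∃ v ∈ H, v ∈ e}).neighborSet v).ncard ≤ G.degree v := by
      rw [← card_neighborFinset_eq_degree, ← Set.ncard_coe_finset, coe_neighborFinset]
      exact Set.ncard_le_ncard (neighborSet_mono (G.deleteEdges_le _) v)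
    exact (Nat.cast_le.mpr hle).trans (hH v hv)

end SimpleGraph

theorem Finset.card_filter_exists_mem_union_le {V : Type*} [DecidableEq V]
    (E : Finset (Sym2 V)) (S T : Finset V) :
    #(E.filter fun e => ∃ v ∈ S ∪ T, v ∈ e) ≤
      #(E.filter fun e => ∃ v ∈ S, v ∈ e) + #(E.filter fun e => ∃ v ∈ T, v ∈ e) := by
  have hsplit : (E.filter fun e => ∃ v ∈ S ∪ T, v ∈ e) =
      (E.filter fun e => ∃ v ∈ S, v ∈ e) ∪ (E.filter fun e => ∃ v ∈ T, v ∈ e) := by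
    ext e
    simp only [mem_filter, mem_union, or_and_right, exists_or, and_or_left]
  rw [hsplit]
  exact card_union_le _ _

theorem Real.div_mul_logb_sq_le_div_three {x : ℝ} (hx : 2 ≤ x) :
    x / (36 * Real.logb 2 x ^ 2) ≤ x / 3 := by
  have hlog : 1 ≤ Real.logb 2 x := by
    rw [Real.le_logb_iff_rpow_le one_lt_two (by linarith), Real.rpow_one]
    exact hx
  exact div_le_div_of_nonneg_left (by linarith) (by norm_num) (by nlinarith)

open Classical in
theorem stmt18_general {X : Type*} [Fintype X] [DecidableEq X] (F : SimpleGraph X)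
    [DecidableRel F.Adj]
    (A B : Finset X) (hcover : A ∪ B = Finset.univ)
    (t : ℕ) (ht : t = F.edgeFinset.card) (ht4 : 4 ≤ t)
    (r : ℝ) :
    (∃ S ⊆ A, (∀ v ∈ S, Real.sqrt (r * t) / 2 ≤ (F.degree v : ℝ)) ∧
        (t : ℝ) / (36 * (Real.logb 2 t) ^ 2) ≤
          ((F.edgeFinset.filter (fun e => ∃ v ∈ S, v ∈ e)).card : ℝ)) ∨
    (∃ S ⊆ B, (∀ v ∈ S, Real.sqrt (r * t) / 2 ≤ (F.degree v : ℝ)) ∧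
        (t : ℝ) / (36 * (Real.logb 2 t) ^ 2) ≤
          ((F.edgeFinset.filter (fun e => ∃ v ∈ S, v ∈ e)).card : ℝ)) ∨
    (∃ F' : SimpleGraph X, F' ≤ F ∧
        (t : ℝ) / (36 * (Real.logb 2 t) ^ 2) ≤ (F'.edgeSet.ncard : ℝ) ∧
        ∀ v, ((F'.neighborSet v).ncard : ℝ) ≤ Real.sqrt (r * t)) := by
  set D := Real.sqrt (r * t)
  set b := (t : ℝ) / (36 * Real.logb 2 t ^ 2)
  set SA := A.filter fun v => D / 2 ≤ (F.degree v : ℝ)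
  set SB := B.filter fun v => D / 2 ≤ (F.degree v : ℝ)
  by_cases hA : b ≤ #(F.edgeFinset.filter fun e => ∃ v ∈ SA, v ∈ e)
  · exact Or.inl ⟨SA, filter_subset _ _, fun v hv => (mem_filter.mp hv).2, hA⟩
  by_cases hB : b ≤ #(F.edgeFinset.filter fun e => ∃ v ∈ SB, v ∈ e)
  · exact Or.inr (Or.inl ⟨SB, filter_subset _ _, fun v hv => (mem_filter.mp hv).2, hB⟩)
  push Not at hA hB
  have hlight : ∀ v ∉ SA ∪ SB, (F.degree v : ℝ) ≤ D := by
    intro v hv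
    have hAB : v ∈ A ∪ B := hcover ▸ mem_univ v
    simp only [SA, SB, mem_union, mem_filter, not_or, not_and, not_le] at hv hAB
    have := Real.sqrt_nonneg (r * t)
    rcases hAB with h | h
    · linarith [hv.1 h]
    · linarith [hv.2 h]
  refine Or.inr (Or.inr ⟨F.deleteEdges {e | ∃ v ∈ SA ∪ SB, v ∈ e}, F.deleteEdges_le _, ?_,
    F.ncard_neighborSet_deleteEdges_le _ (Real.sqrt_nonneg _) hlight⟩)
  have hsplit := F.ncard_edgeSet_deleteEdges_add_card_filter (SA ∪ SB)
  have hheavy := F.edgeFinset.card_filter_exists_mem_union_le SA SB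
  have hb : b ≤ t / 3 := Real.div_mul_logb_sq_le_div_three (by exact_mod_cast ht4.trans' (by norm_num))
  have hcount : (t : ℝ) ≤ (F.deleteEdges {e | ∃ v ∈ SA ∪ SB, v ∈ e}).edgeSet.ncard +
      (#(F.edgeFinset.filter fun e => ∃ v ∈ SA, v ∈ e) +
        #(F.edgeFinset.filter fun e => ∃ v ∈ SB, v ∈ e)) := by
    exact_mod_cast (ht.trans hsplit.symm).le.trans (Nat.add_le_add_left hheavy _)
  linarith

open Classical in
/-- Degree-class decomposition of a bipartite graph `F` with parts `A`, `B` and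
`t ≥ 4` edges: either some side has a subset `S` of vertices of degree at least
`√(rt)/2` incident to at least `t/(36 (log₂ t)²)` edges, or `F` has a subgraph with
at least `t/(36 (log₂ t)²)` edges and maximum degree at most `√(rt)`. -/
theorem stmt18 {X : Type*} [Fintype X] [DecidableEq X] (F : SimpleGraph X)
    [DecidableRel F.Adj]
    (A B : Finset X) (hdisj : Disjoint A B) (hcover : A ∪ B = Finset.univ)
    (hbip : ∀ u v, F.Adj u v → (u ∈ A ∧ v ∈ B) ∨ (u ∈ B ∧ v ∈ A))
    (t : ℕ) (ht : t = F.edgeFinset.card) (ht4 : 4 ≤ t)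
    (r : ℝ) (hr : 1 ≤ r) :
    (∃ S ⊆ A, (∀ v ∈ S, Real.sqrt (r * t) / 2 ≤ (F.degree v : ℝ)) ∧
        (t : ℝ) / (36 * (Real.logb 2 t) ^ 2) ≤
          ((F.edgeFinset.filter (fun e => ∃ v ∈ S, v ∈ e)).card : ℝ)) ∨
    (∃ S ⊆ B, (∀ v ∈ S, Real.sqrt (r * t) / 2 ≤ (F.degree v : ℝ)) ∧
        (t : ℝ) / (36 * (Real.logb 2 t) ^ 2) ≤
          ((F.edgeFinset.filter (fun e => ∃ v ∈ S, v ∈ e)).card : ℝ)) ∨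
    (∃ F' : SimpleGraph X, F' ≤ F ∧
        (t : ℝ) / (36 * (Real.logb 2 t) ^ 2) ≤ (F'.edgeSet.ncard : ℝ) ∧
        ∀ v, ((F'.neighborSet v).ncard : ℝ) ≤ Real.sqrt (r * t)) :=
  stmt18_general F A B hcover t ht ht4 r
end
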